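/- arXiv:1501.01801 — 7 statements merged into one kernel-verified Lean document; each statement's English description precedes it below -/
import Mathlib

section
/- Let n ≥ 1, 0 < s < 1 and 1 ≤ p < ∞ with sp < n. There is a constant C = C(n, s, p) such that for every ε > 0 and all ω, σ ∈ ℝⁿ with |ω| = |σ| = 1 (sup norm), the kernel k(ω, σ) := ∫₀^ε ∫₀^ε δ^{n−1} λ^{n−1} / |δω − λσ|^{n+sp} dδ dλ satisfies k(ω, σ) ≤ C ε^{n−sp} / |ω − σ|^{n+sp−1}. -/
/-!
Write `a = ‖δω - λσ‖`, `m = ‖ω - σ‖` and `D = |δ - λ| + δm`. The triangle inequality gives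
`D ≤ 3a` and, with the roles of `(δ, ω)` and `(λ, σ)` swapped, `λm ≤ 3a`. Splitting
`a^(n+sp) = a^(n-1) a^(1+sp)` bounds the integrand by `3^(n+sp) m^(1-n) δ^(n-1) D^(-(1+sp))`.
Integrating in `λ` over all of `ℝ` gives `2 (δm)^(-sp) / sp`, and what is left, a multiple of
`∫₀^ε δ^(n-1-sp) dδ`, converges since `sp < n`.
-/

open MeasureTheory ENNReal Set

theorem lintegral_comp_abs (f : ℝ → ℝ≥0∞) :
    ∫⁻ x, f |x| = 2 * ∫⁻ x in Ioi 0, f x := by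
  have h_pos : ∫⁻ x in Ioi 0, f |x| = ∫⁻ x in Ioi 0, f x :=
    setLIntegral_congr_fun measurableSet_Ioi fun x hx => by rw [abs_of_pos hx]
  have h_neg : ∫⁻ x in Iic 0, f |x| = ∫⁻ x in Ioi 0, f x := by
    have := (Measure.measurePreserving_neg (volume : Measure ℝ)).setLIntegral_comp_preimage_emb
      (Homeomorph.neg ℝ).measurableEmbedding (fun y => f |y|) (Ici 0)
    simp only [abs_neg, neg_preimage, neg_Ici, neg_zero] at this
    rw [this, Measure.restrict_congr_set Ioi_ae_eq_Ici.symm, h_pos]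
  rw [← lintegral_add_compl _ measurableSet_Ioi, compl_Ioi, h_pos, h_neg, two_mul]

theorem lintegral_Ioi_add_rpow_neg {c q : ℝ} (hc : 0 < c) (hq : 0 < q) :
    ∫⁻ t in Ioi 0, ENNReal.ofReal ((t + c) ^ (-(q + 1))) = ENNReal.ofReal (c ^ (-q) / q) := by
  have h_shift : ∫⁻ t in Ioi 0, ENNReal.ofReal ((t + c) ^ (-(q + 1)))
      = ∫⁻ u in Ioi c, ENNReal.ofReal (u ^ (-(q + 1))) := by
    have := (measurePreserving_add_right volume c).setLIntegral_comp_preimage_emb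
      (measurableEmbedding_addRight c) (fun u => ENNReal.ofReal (u ^ (-(q + 1)))) (Ioi c)
    simpa only [preimage_add_const_Ioi, sub_self] using this
  have h_nonneg : 0 ≤ᵐ[volume.restrict (Ioi c)] fun u : ℝ => u ^ (-(q + 1)) :=
    (ae_restrict_iff' measurableSet_Ioi).2 <| .of_forall fun u hu =>
      (Real.rpow_pos_of_pos (hc.trans hu) _).le
  rw [h_shift, ← ofReal_integral_eq_lintegral_ofReal
    (integrableOn_Ioi_rpow_of_lt (by linarith) hc) h_nonneg,
    integral_Ioi_rpow_of_lt (by linarith) hc]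
  congr 1
  rw [show -(q + 1) + 1 = -q by ring, neg_div_neg_eq]

theorem lintegral_abs_sub_add_rpow_neg (δ : ℝ) {c q : ℝ} (hc : 0 < c) (hq : 0 < q) :
    ∫⁻ lam, ENNReal.ofReal ((|δ - lam| + c) ^ (-(q + 1))) =
      2 * ENNReal.ofReal (c ^ (-q) / q) := by
  rw [lintegral_sub_left_eq_self (fun x => ENNReal.ofReal ((|x| + c) ^ (-(q + 1)))) δ,
    lintegral_comp_abs (fun x => ENNReal.ofReal ((x + c) ^ (-(q + 1)))),
    lintegral_Ioi_add_rpow_neg hc hq]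

theorem lintegral_Ioo_rpow_sub_one {ε e : ℝ} (hε : 0 ≤ ε) (he : 0 < e) :
    ∫⁻ x in Ioo 0 ε, ENNReal.ofReal (x ^ (e - 1)) = ENNReal.ofReal (ε ^ e / e) := by
  have h_int : IntegrableOn (fun x : ℝ => x ^ (e - 1)) (Ioc 0 ε) :=
    (intervalIntegrable_iff_integrableOn_Ioc_of_le hε).mp
      (intervalIntegral.intervalIntegrable_rpow' (by linarith))
  have h_nonneg : 0 ≤ᵐ[volume.restrict (Ioc 0 ε)] fun x : ℝ => x ^ (e - 1) :=
    (ae_restrict_iff' measurableSet_Ioc).2 <| .of_forall fun x hx =>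
      (Real.rpow_pos_of_pos hx.1 _).le
  rw [Measure.restrict_congr_set Ioo_ae_eq_Ioc,
    ← ofReal_integral_eq_lintegral_ofReal h_int h_nonneg,
    ← intervalIntegral.integral_of_le hε, integral_rpow (Or.inl (by linarith)),
    sub_add_cancel, Real.zero_rpow he.ne', sub_zero]

section NormedSpace

variable {E : Type*} [NormedAddCommGroup E] [NormedSpace ℝ E] {ω σ : E}

theorem abs_sub_add_mul_norm_sub_le (hω : ‖ω‖ = 1) (hσ : ‖σ‖ = 1) {δ lam : ℝ}
    (hδ : 0 ≤ δ) (hlam : 0 ≤ lam) :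
    |δ - lam| + δ * ‖ω - σ‖ ≤ 3 * ‖δ • ω - lam • σ‖ := by
  have h_radial : |δ - lam| ≤ ‖δ • ω - lam • σ‖ := by
    simpa [norm_smul, hω, hσ, abs_of_nonneg hδ, abs_of_nonneg hlam] using
      abs_norm_sub_norm_le (δ • ω) (lam • σ)
  have h_angular : δ * ‖ω - σ‖ ≤ ‖δ • ω - lam • σ‖ + |δ - lam| :=
    calc δ * ‖ω - σ‖ = ‖(δ • ω - lam • σ) - (δ - lam) • σ‖ := by
          rw [← norm_smul_of_nonneg hδ]
          congr 1
          module
      _ ≤ ‖δ • ω - lam • σ‖ + |δ - lam| := by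
          simpa [norm_smul, hσ] using norm_sub_le (δ • ω - lam • σ) ((δ - lam) • σ)
  linarith

theorem rpow_mul_rpow_div_norm_smul_sub_rpow_le (hω : ‖ω‖ = 1) (hσ : ‖σ‖ = 1)
    (hm : 0 < ‖ω - σ‖) {d q δ lam : ℝ} (hd : 1 ≤ d) (hq : -1 ≤ q) (hδ : 0 < δ) (hlam : 0 < lam) :
    δ ^ (d - 1) * lam ^ (d - 1) / ‖δ • ω - lam • σ‖ ^ (d + q) ≤
      3 ^ (d + q) * ‖ω - σ‖ ^ (1 - d) * δ ^ (d - 1) *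
        (|δ - lam| + δ * ‖ω - σ‖) ^ (-(q + 1)) := by
  set m := ‖ω - σ‖
  set a := ‖δ • ω - lam • σ‖
  set D := |δ - lam| + δ * m
  have hD : 0 < D := by positivity
  have hDa : D ≤ 3 * a := abs_sub_add_mul_norm_sub_le hω hσ hδ.le hlam.le
  have ha : 0 < a := by linarith
  have hlam_a : lam * m ≤ 3 * a := by
    have := abs_sub_add_mul_norm_sub_le hσ hω hlam.le hδ.le
    rw [norm_sub_rev σ, norm_sub_rev (lam • σ)] at this
    linarith [abs_nonneg (lam - δ)]
  calc δ ^ (d - 1) * lam ^ (d - 1) / a ^ (d + q)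
      = δ ^ (d - 1) * (lam / a) ^ (d - 1) * a⁻¹ ^ (q + 1) := by
        rw [Real.div_rpow hlam.le ha.le, Real.inv_rpow ha.le,
          show d + q = (d - 1) + (q + 1) by ring, Real.rpow_add ha]
        field_simp
    _ ≤ δ ^ (d - 1) * (3 / m) ^ (d - 1) * (3 / D) ^ (q + 1) := by
        have h_lam : lam / a ≤ 3 / m := by rw [div_le_div_iff₀ ha hm]; linarith
        have h_inv : a⁻¹ ≤ 3 / D := by rw [inv_eq_one_div, div_le_div_iff₀ ha hD]; linarith
        gcongr δ ^ (d - 1) * ?_ ^ (d - 1) * ?_ ^ (q + 1)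
        linarith
    _ = 3 ^ (d + q) * m ^ (1 - d) * δ ^ (d - 1) * D ^ (-(q + 1)) := by
        rw [Real.div_rpow (by norm_num) hm.le, Real.div_rpow (by norm_num) hD.le,
          Real.rpow_neg hD.le, show 1 - d = -(d - 1) by ring, Real.rpow_neg hm.le,
          show d + q = (d - 1) + (q + 1) by ring, Real.rpow_add (by norm_num : (0 : ℝ) < 3) (d - 1)]
        ring

theorem lintegral_Ioo_kernel_le (hω : ‖ω‖ = 1) (hσ : ‖σ‖ = 1) (hm : 0 < ‖ω - σ‖)
    {d q δ : ℝ} (hd : 1 ≤ d) (hq : 0 < q) (hδ : 0 < δ) (ε : ℝ) :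
    ∫⁻ lam in Ioo 0 ε, ENNReal.ofReal (δ ^ (d - 1) * lam ^ (d - 1)) /
        ENNReal.ofReal ‖δ • ω - lam • σ‖ ^ (d + q) ≤
      ENNReal.ofReal (2 * 3 ^ (d + q) / q * ‖ω - σ‖ ^ (1 - d - q)) *
        ENNReal.ofReal (δ ^ (d - q - 1)) := by
  set m := ‖ω - σ‖
  set A := 3 ^ (d + q) * m ^ (1 - d) * δ ^ (d - 1)
  have hA : 0 ≤ A := by positivity
  have h_pointwise : ∀ lam ∈ Ioo 0 ε,
      ENNReal.ofReal (δ ^ (d - 1) * lam ^ (d - 1)) / ENNReal.ofReal ‖δ • ω - lam • σ‖ ^ (d + q) ≤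
        ENNReal.ofReal A * ENNReal.ofReal ((|δ - lam| + δ * m) ^ (-(q + 1))) := by
    intro lam hlam
    have ha : 0 < ‖δ • ω - lam • σ‖ := by
      have := abs_sub_add_mul_norm_sub_le hω hσ hδ.le hlam.1.le
      nlinarith [abs_nonneg (δ - lam), mul_pos hδ hm]
    rw [ENNReal.ofReal_rpow_of_pos ha, ← ENNReal.ofReal_div_of_pos (by positivity),
      ← ENNReal.ofReal_mul hA]
    exact ENNReal.ofReal_le_ofReal
      (rpow_mul_rpow_div_norm_smul_sub_rpow_le hω hσ hm hd (by linarith) hδ hlam.1)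
  calc _ ≤ ∫⁻ lam in Ioo 0 ε,
          ENNReal.ofReal A * ENNReal.ofReal ((|δ - lam| + δ * m) ^ (-(q + 1))) :=
        setLIntegral_mono' measurableSet_Ioo h_pointwise
    _ ≤ ENNReal.ofReal A * ∫⁻ lam, ENNReal.ofReal ((|δ - lam| + δ * m) ^ (-(q + 1))) := by
        rw [lintegral_const_mul' _ _ ENNReal.ofReal_ne_top]
        exact mul_le_mul_right (setLIntegral_le_lintegral _ _) _
    _ = ENNReal.ofReal (A * (2 * ((δ * m) ^ (-q) / q))) := by
        rw [lintegral_abs_sub_add_rpow_neg δ (by positivity) hq, ENNReal.ofReal_mul hA,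
          ENNReal.ofReal_mul zero_le_two, ENNReal.ofReal_ofNat]
    _ = _ := by
        rw [← ENNReal.ofReal_mul (by positivity)]
        congr 1
        rw [Real.mul_rpow hδ.le hm.le, show d - q - 1 = (d - 1) + -q by ring,
          Real.rpow_add hδ, show 1 - d - q = (1 - d) + -q by ring, Real.rpow_add hm]
        ring

theorem lintegral_Ioo_lintegral_Ioo_kernel_le (hω : ‖ω‖ = 1) (hσ : ‖σ‖ = 1) {d q ε : ℝ}
    (hd : 1 ≤ d) (hq : 0 < q) (hqd : q < d) (hε : 0 < ε) :
    ∫⁻ δ in Ioo 0 ε, ∫⁻ lam in Ioo 0 ε, ENNReal.ofReal (δ ^ (d - 1) * lam ^ (d - 1)) /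
        ENNReal.ofReal ‖δ • ω - lam • σ‖ ^ (d + q) ≤
      ENNReal.ofReal (2 * 3 ^ (d + q) / (q * (d - q)) * ε ^ (d - q)) /
        ENNReal.ofReal ‖ω - σ‖ ^ (d + q - 1) := by
  rcases (norm_nonneg (ω - σ)).eq_or_lt with hm | hm
  · rw [← hm, ENNReal.ofReal_zero, ENNReal.zero_rpow_of_pos (by linarith),
      ENNReal.div_zero (ENNReal.ofReal_pos.2 (by positivity)).ne']
    exact le_top
  set m := ‖ω - σ‖
  calc _ ≤ ∫⁻ δ in Ioo 0 ε, ENNReal.ofReal (2 * 3 ^ (d + q) / q * m ^ (1 - d - q)) *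
          ENNReal.ofReal (δ ^ (d - q - 1)) :=
        setLIntegral_mono' measurableSet_Ioo fun δ hδ =>
          lintegral_Ioo_kernel_le hω hσ hm hd hq hδ.1 ε
    _ = ENNReal.ofReal (2 * 3 ^ (d + q) / q * m ^ (1 - d - q) * (ε ^ (d - q) / (d - q))) := by
        rw [lintegral_const_mul' _ _ ENNReal.ofReal_ne_top,
          lintegral_Ioo_rpow_sub_one hε.le (by linarith), ← ENNReal.ofReal_mul (by positivity)]
    _ = _ := by
        rw [ENNReal.ofReal_rpow_of_pos hm, ← ENNReal.ofReal_div_of_pos (by positivity),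
          show 1 - d - q = -(d + q - 1) by ring, Real.rpow_neg hm.le]
        congr 1
        field_simp

end NormedSpace

theorem statement7_general (n : ℕ) (hn : 1 ≤ n) (s p : ℝ)
    (hs0 : 0 < s) (hp : 1 ≤ p) (hsp : s * p < n) :
    ∃ C : ℝ, 0 < C ∧ ∀ (ε : ℝ), 0 < ε → ∀ (ω σ : Fin n → ℝ), ‖ω‖ = 1 → ‖σ‖ = 1 →
      (∫⁻ δ in Set.Ioo (0 : ℝ) ε, ∫⁻ lam in Set.Ioo (0 : ℝ) ε,
          ENNReal.ofReal (δ ^ (n - 1) * lam ^ (n - 1)) /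
            (ENNReal.ofReal ‖δ • ω - lam • σ‖) ^ ((n : ℝ) + s * p)) ≤
        ENNReal.ofReal (C * ε ^ ((n : ℝ) - s * p)) /
          (ENNReal.ofReal ‖ω - σ‖) ^ ((n : ℝ) + s * p - 1) := by
  have hq : 0 < s * p := mul_pos hs0 (by linarith)
  have hnq : 0 < (n : ℝ) - s * p := sub_pos.2 hsp
  refine ⟨2 * 3 ^ ((n : ℝ) + s * p) / (s * p * ((n : ℝ) - s * p)), by positivity, ?_⟩
  intro ε hε ω σ hω hσ
  have h_pow (x : ℝ) : x ^ (n - 1) = x ^ ((n : ℝ) - 1) := by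
    rw [← Real.rpow_natCast, Nat.cast_sub hn, Nat.cast_one]
  simp only [h_pow]
  exact lintegral_Ioo_lintegral_Ioo_kernel_le hω hσ (by exact_mod_cast hn) hq hsp hε

/-- Let `n ≥ 1`, `0 < s < 1`, `1 ≤ p < ∞` with `sp < n`.  There is a constant
`C = C(n, s, p)` such that for every `ε > 0` and all `ω, σ ∈ ℝⁿ` with `|ω| = |σ| = 1`
(sup norm, which is the norm of the Pi type `Fin n → ℝ`), the kernel
`k(ω, σ) = ∫₀^ε ∫₀^ε δ^{n−1} λ^{n−1} / |δω − λσ|^{n+sp} dδ dλ` satisfies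
`k(ω, σ) ≤ C ε^{n−sp} / |ω − σ|^{n+sp−1}`. -/
theorem statement7 (n : ℕ) (hn : 1 ≤ n) (s p : ℝ)
    (hs0 : 0 < s) (hs1 : s < 1) (hp : 1 ≤ p) (hsp : s * p < n) :
    ∃ C : ℝ, 0 < C ∧ ∀ (ε : ℝ), 0 < ε → ∀ (ω σ : Fin n → ℝ), ‖ω‖ = 1 → ‖σ‖ = 1 →
      (∫⁻ δ in Set.Ioo (0 : ℝ) ε, ∫⁻ lam in Set.Ioo (0 : ℝ) ε,
          ENNReal.ofReal (δ ^ (n - 1) * lam ^ (n - 1)) /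
            (ENNReal.ofReal ‖δ • ω - lam • σ‖) ^ ((n : ℝ) + s * p)) ≤
        ENNReal.ofReal (C * ε ^ ((n : ℝ) - s * p)) /
          (ENNReal.ofReal ‖ω - σ‖) ^ ((n : ℝ) + s * p - 1) :=
  statement7_general n hn s p hs0 hp hsp
end

section
/- Let n ≥ 1, 0 < s < 1 and 1 ≤ p < ∞ with sp < n. There is a constant C = C(n, s, p) such that for all ω, σ ∈ ℝⁿ with |σ| = 1 and 1 ≤ |ω| ≤ 3 (sup norm), one has ∫₀^1 τ^{n−1} / |ω − τσ|^{n+sp} dτ ≤ C / |ω − σ|^{n+sp−1}. -/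
/-!
With `α = n + sp > 1`: for `τ ∈ (0, 1)` the triangle inequality through `σ` and the bound
`‖ω - τσ‖ ≥ ‖ω‖ - τ ≥ 1 - τ` give `1 - τ + ‖ω - σ‖ ≤ 3 ‖ω - τσ‖`. Since `τ^(n-1) ≤ 1`, the integrand
is at most `3^α (1 - τ + ‖ω - σ‖)^(-α)`, whose integral over `(0, 1)` is at most
`‖ω - σ‖^(1-α) / (α - 1)`; so `C = 3^α / (α - 1)` works.
-/

open MeasureTheory Filter Topology ENNReal

theorem one_sub_add_norm_sub_le_three_mul_norm_sub_smul {E : Type*} [NormedAddCommGroup E]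
    [NormedSpace ℝ E] {ω σ : E} (hσ : ‖σ‖ = 1) (hω : 1 ≤ ‖ω‖) {τ : ℝ} (hτ0 : 0 ≤ τ) (hτ1 : τ ≤ 1) :
    1 - τ + ‖ω - σ‖ ≤ 3 * ‖ω - τ • σ‖ := by
  have hτσ : ‖τ • σ‖ = τ := by rw [norm_smul, hσ, Real.norm_of_nonneg hτ0, mul_one]
  have hστσ : ‖σ - τ • σ‖ = 1 - τ := by
    rw [show σ - τ • σ = (1 - τ) • σ by rw [sub_smul, one_smul], norm_smul, hσ,
      Real.norm_of_nonneg (by linarith), mul_one]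
  have h₁ : ‖ω‖ - ‖τ • σ‖ ≤ ‖ω - τ • σ‖ := norm_sub_norm_le ω (τ • σ)
  have h₂ : ‖ω - σ‖ ≤ ‖ω - τ • σ‖ + ‖σ - τ • σ‖ := by
    simpa using norm_sub_le (ω - τ • σ) (σ - τ • σ)
  linarith

theorem integral_one_sub_add_rpow_neg_le {α e : ℝ} (hα : 1 < α) (he : 0 < e) :
    ∫ τ in (0 : ℝ)..1, (1 - τ + e) ^ (-α) ≤ e ^ (1 - α) / (α - 1) := by
  have hzero : (0 : ℝ) ∉ Set.uIcc e (1 + e) := by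
    rw [Set.uIcc_of_le (by linarith)]
    exact fun h => h.1.not_gt he
  simp_rw [show ∀ τ : ℝ, 1 - τ + e = 1 + e - τ from fun τ => by ring]
  rw [intervalIntegral.integral_comp_sub_left (fun x => x ^ (-α)), add_sub_cancel_left, sub_zero,
    integral_rpow (Or.inr ⟨by linarith, hzero⟩)]
  calc ((1 + e) ^ (-α + 1) - e ^ (-α + 1)) / (-α + 1)
      = (e ^ (1 - α) - (1 + e) ^ (1 - α)) / (α - 1) := by
        rw [show -α + 1 = -(α - 1) by ring, div_neg, ← neg_div, neg_sub, neg_sub]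
    _ ≤ e ^ (1 - α) / (α - 1) := by
        gcongr
        exact sub_le_self _ (by positivity)

theorem setLIntegral_Ioo_one_sub_add_rpow_neg_le {α e : ℝ} (hα : 1 < α) (he : 0 < e) :
    ∫⁻ τ in Set.Ioo (0 : ℝ) 1, ENNReal.ofReal ((1 - τ + e) ^ (-α)) ≤
      ENNReal.ofReal (e ^ (1 - α) / (α - 1)) := by
  have hcont : ContinuousOn (fun τ : ℝ => (1 - τ + e) ^ (-α)) (Set.Icc 0 1) :=
    ContinuousOn.rpow_const (by fun_prop) fun τ hτ => Or.inl (by linarith [hτ.2])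
  have hnonneg : 0 ≤ᵐ[volume.restrict (Set.Ioo (0 : ℝ) 1)] fun τ => (1 - τ + e) ^ (-α) := by
    filter_upwards [ae_restrict_mem measurableSet_Ioo] with τ hτ
    exact Real.rpow_nonneg (by linarith [hτ.2]) _
  rw [← ofReal_integral_eq_lintegral_ofReal
      (hcont.integrableOn_Icc.mono_set Set.Ioo_subset_Icc_self) hnonneg,
    ← integral_Ioc_eq_integral_Ioo, ← intervalIntegral.integral_of_le zero_le_one]
  exact ENNReal.ofReal_le_ofReal (integral_one_sub_add_rpow_neg_le hα he)

theorem ofReal_div_ofReal_rpow_le {a b c r α : ℝ} (ha : a ≤ 1) (hb : 0 < b) (hc : 0 < c)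
    (hbr : b ≤ c * r) (hα : 0 ≤ α) :
    ENNReal.ofReal a / ENNReal.ofReal r ^ α ≤
      ENNReal.ofReal (c ^ α) * ENNReal.ofReal (b ^ (-α)) := by
  have hbc : 0 < b / c := div_pos hb hc
  calc ENNReal.ofReal a / ENNReal.ofReal r ^ α
      ≤ 1 / ENNReal.ofReal (b / c) ^ α := by
        gcongr
        · exact ENNReal.ofReal_le_one.mpr ha
        · rwa [div_le_iff₀' hc]
    _ = ENNReal.ofReal (c ^ α) * ENNReal.ofReal (b ^ (-α)) := by
        rw [one_div, ← ENNReal.rpow_neg, ENNReal.ofReal_rpow_of_pos hbc,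
          ← ENNReal.ofReal_mul (by positivity), Real.rpow_neg hbc.le, Real.div_rpow hb.le hc.le,
          inv_div, Real.rpow_neg hb.le, div_eq_mul_inv]

theorem statement8_general (n : ℕ) (hn : 1 ≤ n) (s p : ℝ)
    (hs0 : 0 < s) (hp : 1 ≤ p) :
    ∃ C : ℝ, 0 < C ∧ ∀ (ω σ : Fin n → ℝ), ‖σ‖ = 1 → 1 ≤ ‖ω‖ → ‖ω‖ ≤ 3 →
      (∫⁻ τ in Set.Ioo (0 : ℝ) 1,
          ENNReal.ofReal (τ ^ (n - 1)) /
            (ENNReal.ofReal ‖ω - τ • σ‖) ^ ((n : ℝ) + s * p)) ≤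
        ENNReal.ofReal C / (ENNReal.ofReal ‖ω - σ‖) ^ ((n : ℝ) + s * p - 1) := by
  set α : ℝ := n + s * p
  have hα : 1 < α := by
    have : (1 : ℝ) ≤ n := by exact_mod_cast hn
    have : 0 < s * p := by positivity
    linarith
  have hC : 0 < 3 ^ α / (α - 1) := div_pos (by positivity) (by linarith)
  refine ⟨3 ^ α / (α - 1), hC, fun ω σ hσ hω _ => ?_⟩
  rcases (norm_nonneg (ω - σ)).eq_or_lt with he | he
  · rw [← he, ENNReal.ofReal_zero, ENNReal.zero_rpow_of_pos (by linarith),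
      ENNReal.div_zero (ENNReal.ofReal_pos.mpr hC).ne']
    exact le_top
  set e := ‖ω - σ‖
  calc (∫⁻ τ in Set.Ioo (0 : ℝ) 1, ENNReal.ofReal (τ ^ (n - 1)) / ENNReal.ofReal ‖ω - τ • σ‖ ^ α)
      ≤ ∫⁻ τ in Set.Ioo (0 : ℝ) 1, ENNReal.ofReal (3 ^ α) * ENNReal.ofReal ((1 - τ + e) ^ (-α)) :=
        setLIntegral_mono (by fun_prop) fun τ ⟨hτ0, hτ1⟩ =>
          ofReal_div_ofReal_rpow_le (pow_le_one₀ hτ0.le hτ1.le) (by linarith) three_pos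
            (one_sub_add_norm_sub_le_three_mul_norm_sub_smul hσ hω hτ0.le hτ1.le) (by linarith)
    _ = ENNReal.ofReal (3 ^ α) * ∫⁻ τ in Set.Ioo (0 : ℝ) 1, ENNReal.ofReal ((1 - τ + e) ^ (-α)) :=
        lintegral_const_mul _ (by fun_prop)
    _ ≤ ENNReal.ofReal (3 ^ α) * ENNReal.ofReal (e ^ (1 - α) / (α - 1)) := by
        gcongr
        exact setLIntegral_Ioo_one_sub_add_rpow_neg_le hα he
    _ = ENNReal.ofReal (3 ^ α / (α - 1)) / ENNReal.ofReal e ^ (α - 1) := by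
        rw [← ENNReal.ofReal_mul (by positivity), ENNReal.ofReal_rpow_of_pos he,
          ← ENNReal.ofReal_div_of_pos (by positivity), ← neg_sub α 1, Real.rpow_neg he.le]
        ring_nf

/-- Let `n ≥ 1`, `0 < s < 1`, `1 ≤ p < ∞` with `sp < n`.  There is a constant
`C = C(n, s, p)` such that for all `ω, σ ∈ ℝⁿ` with `|σ| = 1` and `1 ≤ |ω| ≤ 3` (sup norm,
which is the norm of the Pi type `Fin n → ℝ`),
`∫₀^1 τ^{n−1} / |ω − τσ|^{n+sp} dτ ≤ C / |ω − σ|^{n+sp−1}`. -/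
theorem statement8 (n : ℕ) (hn : 1 ≤ n) (s p : ℝ)
    (hs0 : 0 < s) (hs1 : s < 1) (hp : 1 ≤ p) (hsp : s * p < n) :
    ∃ C : ℝ, 0 < C ∧ ∀ (ω σ : Fin n → ℝ), ‖σ‖ = 1 → 1 ≤ ‖ω‖ → ‖ω‖ ≤ 3 →
      (∫⁻ τ in Set.Ioo (0 : ℝ) 1,
          ENNReal.ofReal (τ ^ (n - 1)) /
            (ENNReal.ofReal ‖ω - τ • σ‖) ^ ((n : ℝ) + s * p)) ≤
        ENNReal.ofReal C / (ENNReal.ofReal ‖ω - σ‖) ^ ((n : ℝ) + s * p - 1) :=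
  statement8_general n hn s p hs0 hp
end

section
/- Let n ≥ 2. There is a constant C = C(n) such that for every ε > 0 and every measurable function G : ℝⁿ → [0, ∞], the quantity H := ∫_{{ω : |ω| = ε}} ∫_{{λ : |λ − ω| = ε}} G(λ) dℋ^{n−1}(λ) dℋ^{n−1}(ω) satisfies H ≤ C ( ε^{n−2} ∫_{{|λ| ≤ 2ε}} G(λ) dλ + ε^{n−1} Σ_{j=1}^{n} Σ_{q ∈ {−1,0,1}} ∫_{{λ : λ_j = 2qε, |λ̂_j| ≤ 2ε}} G(λ) dℋ^{n−1}(λ) ), where λ̂_j = (λ_1, …, λ_{j−1}, λ_{j+1}, …, λ_n). -/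
/-!
Cover the sup-norm sphere `|ω| = ε` by its faces `{ω_j = ±ε}`, and the sphere `|λ - ω| = ε` by
the faces `{λ_i = ω_i ± ε}`, which all lie in the cube `|λ| ≤ 2ε`. When `ω` runs over the face
`ω_j = ±ε`, a slice `λ_j = ω_j ± ε` is one of the fixed hyperplanes `λ_j ∈ {-2ε, 0, 2ε}`, so the
outer integral only contributes the area `(2ε)^(n-1)` of the face. For `i ≠ j` the slice
`λ_i = ω_i ± ε` moves with the free coordinate `ω_i`; integrating over `ω_i` sweeps out the cube,
which gives its volume integral times `(2ε)^(n-2)` from the other coordinates. Both steps rest on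
the fact that `ℋ^(n-1)` on a coordinate hyperplane is Lebesgue measure on `ℝ^(n-1)`: inserting a
coordinate is an isometry for the sup norm.
-/

open MeasureTheory Metric Set
open scoped ENNReal

theorem measurableSet_setOf_apply_eq_inter_closedBall {ι : Type*} [Fintype ι] (i : ι) (c r : ℝ) :
    MeasurableSet ({x : ι → ℝ | x i = c} ∩ closedBall 0 r) :=
  (measurableSet_eq_fun (measurable_pi_apply i) measurable_const).inter measurableSet_closedBall

section Hyperplane

variable {k : ℕ}

theorem isometry_insertNth {α : Type*} [PseudoEMetricSpace α] (i : Fin (k + 1)) (c : α) :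
    Isometry (Fin.insertNth (α := fun _ => α) i c) := by
  intro y z
  simp only [edist_pi_def]
  rw [Fin.univ_succAbove k i, Finset.sup_cons, Finset.sup_map]
  simp [Function.comp_def]

theorem range_insertNth {α : Type*} (i : Fin (k + 1)) (c : α) :
    range (Fin.insertNth (α := fun _ => α) i c) = {x | x i = c} := by
  ext x
  refine ⟨by rintro ⟨y, rfl⟩; simp, fun hx => ⟨i.removeNth x, ?_⟩⟩
  rw [← hx, Fin.insertNth_self_removeNth]

theorem measurable_insertNth_uncurry {α : Type*} [MeasurableSpace α] (i : Fin (k + 1)) :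
    Measurable fun p : α × (Fin k → α) => (Fin.insertNth i p.1 p.2 : Fin (k + 1) → α) :=
  (MeasurableEquiv.piFinSuccAbove (fun _ => α) i).symm.measurable

theorem hausdorffMeasure_restrict_hyperplane (i : Fin (k + 1)) (c : ℝ) :
    (μH[k] : Measure (Fin (k + 1) → ℝ)).restrict {x | x i = c} =
      volume.map (Fin.insertNth i c) := by
  rw [← range_insertNth, ← (isometry_insertNth i c).map_hausdorffMeasure (Or.inl k.cast_nonneg)]
  simpa using congrArg (Measure.map _) (hausdorffMeasure_pi_real (ι := Fin k))

theorem setLIntegral_hausdorffMeasure_hyperplane (i : Fin (k + 1)) (c : ℝ)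
    (F : (Fin (k + 1) → ℝ) → ℝ≥0∞) :
    ∫⁻ x in {x | x i = c}, F x ∂μH[k] = ∫⁻ y, F (Fin.insertNth i c y) := by
  rw [hausdorffMeasure_restrict_hyperplane,
    (isometry_insertNth i c).isClosedEmbedding.measurableEmbedding.lintegral_map]

theorem setLIntegral_hausdorffMeasure_hyperplane_inter (i : Fin (k + 1)) (c : ℝ)
    (F : (Fin (k + 1) → ℝ) → ℝ≥0∞) {s : Set (Fin (k + 1) → ℝ)} (hs : MeasurableSet s) :
    ∫⁻ x in {x | x i = c} ∩ s, F x ∂μH[k] = ∫⁻ y, s.indicator F (Fin.insertNth i c y) := by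
  rw [inter_comm, ← setLIntegral_indicator hs, setLIntegral_hausdorffMeasure_hyperplane]

theorem lintegral_eq_lintegral_insertNth (i : Fin (k + 1)) {F : (Fin (k + 1) → ℝ) → ℝ≥0∞}
    (hF : Measurable F) :
    ∫⁻ x, F x = ∫⁻ c, ∫⁻ y, F (Fin.insertNth i c y) := by
  have e := (measurePreserving_piFinSuccAbove (fun _ : Fin (k + 1) => (volume : Measure ℝ)) i).symm
  rw [← volume_pi, ← volume_pi] at e
  rw [← e.lintegral_comp hF]
  exact lintegral_prod _ (hF.comp (measurable_insertNth_uncurry i)).aemeasurable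

theorem measurable_setLIntegral_hausdorffMeasure_hyperplane_inter (i : Fin (k + 1))
    {F : (Fin (k + 1) → ℝ) → ℝ≥0∞} (hF : Measurable F) {s : Set (Fin (k + 1) → ℝ)}
    (hs : MeasurableSet s) :
    Measurable fun c => ∫⁻ x in {x | x i = c} ∩ s, F x ∂μH[k] := by
  simp_rw [setLIntegral_hausdorffMeasure_hyperplane_inter i _ F hs]
  exact ((hF.indicator hs).comp (measurable_insertNth_uncurry i)).lintegral_prod_right'

theorem lintegral_setLIntegral_hausdorffMeasure_hyperplane_inter (i : Fin (k + 1))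
    {F : (Fin (k + 1) → ℝ) → ℝ≥0∞} (hF : Measurable F) {s : Set (Fin (k + 1) → ℝ)}
    (hs : MeasurableSet s) :
    ∫⁻ c, ∫⁻ x in {x | x i = c} ∩ s, F x ∂μH[k] = ∫⁻ x in s, F x := by
  simp_rw [setLIntegral_hausdorffMeasure_hyperplane_inter i _ F hs]
  rw [← lintegral_indicator hs, lintegral_eq_lintegral_insertNth i (hF.indicator hs)]

theorem preimage_insertNth_closedBall_zero (i : Fin (k + 1)) {c r : ℝ} (hc : |c| ≤ r) :
    (Fin.insertNth (α := fun _ => ℝ) i c) ⁻¹' closedBall 0 r = closedBall 0 r := by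
  have hr : 0 ≤ r := (abs_nonneg c).trans hc
  ext y
  simp [pi_norm_le_iff_of_nonneg hr, Fin.forall_iff_succAbove i, hc]

theorem setLIntegral_hausdorffMeasure_face (i : Fin (k + 1)) {c r : ℝ} (hc : |c| ≤ r)
    (F : (Fin (k + 1) → ℝ) → ℝ≥0∞) :
    ∫⁻ x in {x | x i = c} ∩ closedBall 0 r, F x ∂μH[k] =
      ∫⁻ y in closedBall 0 r, F (Fin.insertNth i c y) := by
  rw [setLIntegral_hausdorffMeasure_hyperplane_inter i c F measurableSet_closedBall,
    ← lintegral_indicator measurableSet_closedBall, ← preimage_insertNth_closedBall_zero i hc]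
  rfl

theorem hausdorffMeasure_face (i : Fin (k + 1)) {c r : ℝ} (hc : |c| ≤ r) :
    (μH[k] : Measure (Fin (k + 1) → ℝ)) ({x | x i = c} ∩ closedBall 0 r) =
      ENNReal.ofReal (2 * r) ^ k := by
  have hr : 0 ≤ r := (abs_nonneg c).trans hc
  rw [← setLIntegral_one, setLIntegral_hausdorffMeasure_face i hc, setLIntegral_one,
    Real.volume_pi_closedBall _ hr, Fintype.card_fin, ENNReal.ofReal_pow (by positivity)]

theorem setLIntegral_hausdorffMeasure_face_comp_eval (i : Fin (k + 1)) {c r : ℝ} (hc : |c| ≤ r)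
    (f : ℝ → ℝ≥0∞) :
    ∫⁻ x in {x : Fin (k + 1) → ℝ | x i = c} ∩ closedBall 0 r, f (x i) ∂μH[k] =
      ENNReal.ofReal (2 * r) ^ k * f c := by
  rw [setLIntegral_congr_fun (measurableSet_setOf_apply_eq_inter_closedBall i c r)
    (fun x hx => by rw [hx.1]), setLIntegral_const, hausdorffMeasure_face i hc, mul_comm]

end Hyperplane

theorem setLIntegral_closedBall_comp_eval {ι : Type*} [Fintype ι] (i : ι) {r : ℝ} (hr : 0 ≤ r)
    {f : ℝ → ℝ≥0∞} (hf : Measurable f) :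
    ∫⁻ y in closedBall (0 : ι → ℝ) r, f (y i) =
      ENNReal.ofReal (2 * r) ^ (Fintype.card ι - 1) * ∫⁻ u in Icc (-r) r, f u := by
  classical
  rw [closedBall_pi _ hr, volume_pi, Measure.restrict_pi_pi,
    ← lintegral_map hf (measurable_pi_apply i), Measure.pi_map_eval]
  simp only [Pi.zero_apply, Real.closedBall_eq_Icc, Measure.restrict_apply MeasurableSet.univ,
    univ_inter, Real.volume_Icc, sub_neg_eq_add, Finset.prod_const, Finset.mem_univ,
    Finset.card_erase_of_mem, Finset.card_univ, lintegral_smul_measure, smul_eq_mul,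
    zero_add, zero_sub]
  rw [← two_mul]

theorem exists_apply_eq_cond_of_norm_eq {ι : Type*} [Fintype ι] {x : ι → ℝ} {r : ℝ}
    (hr : 0 < r) (hx : ‖x‖ = r) : ∃ i s, x i = cond s r (-r) := by
  by_contra! h
  have hlt : ∀ i, ‖x i‖ < r := fun i => (hx ▸ norm_le_pi_norm x i).lt_of_ne fun he => by
    rcases (abs_eq hr.le).1 he with h' | h'
    exacts [h i true h', h i false h']
  exact ((pi_norm_lt_iff hr).2 hlt).ne hx

theorem sphere_subset_iUnion_faces {ι : Type*} [Fintype ι] (a : ι → ℝ) {r : ℝ} (hr : 0 < r) :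
    sphere a r ⊆ ⋃ p : ι × Bool, {x | x p.1 = a p.1 + cond p.2 r (-r)} ∩ closedBall a r := by
  intro x hx
  obtain ⟨i, s, h⟩ := exists_apply_eq_cond_of_norm_eq hr (mem_sphere_iff_norm.1 hx)
  exact mem_iUnion.2 ⟨(i, s), by simp [← h], sphere_subset_closedBall hx⟩

theorem setLIntegral_sphere_le_sum_faces {ι : Type*} [Fintype ι] (μ : Measure (ι → ℝ))
    (a : ι → ℝ) {r : ℝ} (hr : 0 < r) (F : (ι → ℝ) → ℝ≥0∞) :
    ∫⁻ x in sphere a r, F x ∂μ ≤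
      ∑ p : ι × Bool, ∫⁻ x in {x | x p.1 = a p.1 + cond p.2 r (-r)} ∩ closedBall a r, F x ∂μ := by
  refine (lintegral_mono_set (sphere_subset_iUnion_faces a hr)).trans ?_
  exact (lintegral_iUnion_le _ _).trans_eq (tsum_fintype _)

theorem exists_cond_add_cond_eq (s t : Bool) (r : ℝ) :
    ∃ q ∈ ({-1, 0, 1} : Finset ℤ), cond s r (-r) + cond t r (-r) = 2 * q * r := by
  cases s <;> cases t
  exacts [⟨-1, by decide, by simp; ring⟩, ⟨0, by decide, by simp⟩,
    ⟨0, by decide, by simp⟩, ⟨1, by decide, by simp; ring⟩]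

section SphereSphere

variable {k : ℕ} {G : (Fin (k + 1) → ℝ) → ℝ≥0∞}

theorem lintegral_face_slice_le_of_ne {i j : Fin (k + 1)} (hij : i ≠ j) {c r : ℝ} (hc : |c| ≤ r)
    (d : ℝ) (hG : Measurable G) {s : Set (Fin (k + 1) → ℝ)} (hs : MeasurableSet s) :
    ∫⁻ ω in {ω : Fin (k + 1) → ℝ | ω j = c} ∩ closedBall 0 r,
        ∫⁻ x in {x | x i = ω i + d} ∩ s, G x ∂μH[k] ∂μH[k] ≤
      ENNReal.ofReal (2 * r) ^ (k - 1) * ∫⁻ x in s, G x := by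
  obtain ⟨l, rfl⟩ := Fin.exists_succAbove_eq hij
  have hr : 0 ≤ r := (abs_nonneg c).trans hc
  set S := fun u => ∫⁻ x in {x | x (j.succAbove l) = u} ∩ s, G x ∂μH[k]
  have hS : Measurable S := measurable_setLIntegral_hausdorffMeasure_hyperplane_inter _ hG hs
  rw [setLIntegral_hausdorffMeasure_face j hc]
  simp only [Fin.insertNth_apply_succAbove]
  refine (setLIntegral_closedBall_comp_eval l hr (f := fun u => S (u + d))
    (hS.comp (measurable_add_const d))).trans_le ?_
  rw [Fintype.card_fin]
  gcongr
  calc ∫⁻ u in Icc (-r) r, S (u + d) ≤ ∫⁻ u, S (u + d) := setLIntegral_le_lintegral _ _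
    _ = ∫⁻ u, S u := lintegral_add_right_eq_self S d
    _ = ∫⁻ x in s, G x := lintegral_setLIntegral_hausdorffMeasure_hyperplane_inter _ hG hs

variable {ε : ℝ}

theorem lintegral_face_slice_le (hε : 0 < ε) (hG : Measurable G) (j i : Fin (k + 1))
    (s t : Bool) :
    ∫⁻ ω in {ω : Fin (k + 1) → ℝ | ω j = cond s ε (-ε)} ∩ closedBall 0 ε,
        ∫⁻ x in {x | x i = ω i + cond t ε (-ε)} ∩ closedBall 0 (2 * ε), G x ∂μH[k] ∂μH[k] ≤
      ENNReal.ofReal (2 * ε) ^ (k - 1) * (∫⁻ x in closedBall 0 (2 * ε), G x) +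
        ENNReal.ofReal (2 * ε) ^ k * ∑ j, ∑ q ∈ ({-1, 0, 1} : Finset ℤ),
          ∫⁻ x in {x | x j = 2 * q * ε} ∩ closedBall 0 (2 * ε), G x ∂μH[k] := by
  have hs : |cond s ε (-ε)| ≤ ε := by cases s <;> simp [abs_of_pos hε]
  rcases eq_or_ne i j with rfl | hij
  · refine le_add_left ?_
    rw [setLIntegral_hausdorffMeasure_face_comp_eval i hs
      (fun u => ∫⁻ x in {x | x i = u + cond t ε (-ε)} ∩ closedBall 0 (2 * ε), G x ∂μH[k])]
    gcongr
    obtain ⟨q, hq, he⟩ := exists_cond_add_cond_eq s t ε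
    rw [he]
    refine le_trans ?_ (Finset.single_le_sum_of_canonicallyOrdered (Finset.mem_univ i))
    exact Finset.single_le_sum_of_canonicallyOrdered (M := ℝ≥0∞) hq
  · exact le_add_right (lintegral_face_slice_le_of_ne hij hs _ hG measurableSet_closedBall)

theorem setLIntegral_sphere_le_sum_slices (hε : 0 < ε) {ω : Fin (k + 1) → ℝ}
    (hω : ω ∈ closedBall 0 ε) :
    ∫⁻ x in sphere ω ε, G x ∂μH[k] ≤ ∑ p : Fin (k + 1) × Bool,
      ∫⁻ x in {x | x p.1 = ω p.1 + cond p.2 ε (-ε)} ∩ closedBall 0 (2 * ε), G x ∂μH[k] := by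
  refine (setLIntegral_sphere_le_sum_faces _ ω hε G).trans (Finset.sum_le_sum fun p _ => ?_)
  refine lintegral_mono_set (inter_subset_inter_right _ (closedBall_subset_closedBall' ?_))
  rw [mem_closedBall] at hω
  linarith

theorem lintegral_sphere_sphere_le (hε : 0 < ε) (hG : Measurable G) :
    ∫⁻ ω in sphere 0 ε, ∫⁻ x in sphere ω ε, G x ∂μH[k] ∂μH[k] ≤
      (4 * (k + 1) ^ 2 : ℕ) *
        (ENNReal.ofReal (2 * ε) ^ (k - 1) * (∫⁻ x in closedBall 0 (2 * ε), G x) +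
          ENNReal.ofReal (2 * ε) ^ k * ∑ j, ∑ q ∈ ({-1, 0, 1} : Finset ℤ),
            ∫⁻ x in {x | x j = 2 * q * ε} ∩ closedBall 0 (2 * ε), G x ∂μH[k]) := by
  set B := ENNReal.ofReal (2 * ε) ^ (k - 1) * (∫⁻ x in closedBall 0 (2 * ε), G x) +
    ENNReal.ofReal (2 * ε) ^ k * ∑ j, ∑ q ∈ ({-1, 0, 1} : Finset ℤ),
      ∫⁻ x in {x | x j = 2 * q * ε} ∩ closedBall 0 (2 * ε), G x ∂μH[k]
  have hmeas (p : Fin (k + 1) × Bool) : Measurable fun ω : Fin (k + 1) → ℝ =>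
      ∫⁻ x in {x | x p.1 = ω p.1 + cond p.2 ε (-ε)} ∩ closedBall 0 (2 * ε), G x ∂μH[k] :=
    (measurable_setLIntegral_hausdorffMeasure_hyperplane_inter p.1 hG measurableSet_closedBall).comp
      ((measurable_pi_apply p.1).add_const _)
  calc ∫⁻ ω in sphere 0 ε, ∫⁻ x in sphere ω ε, G x ∂μH[k] ∂μH[k]
      ≤ ∑ p : Fin (k + 1) × Bool, ∫⁻ ω in {ω | ω p.1 = cond p.2 ε (-ε)} ∩ closedBall 0 ε,
          ∫⁻ x in sphere ω ε, G x ∂μH[k] ∂μH[k] := by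
        simpa using setLIntegral_sphere_le_sum_faces μH[k] 0 hε _
    _ ≤ ∑ p : Fin (k + 1) × Bool, ∑ p' : Fin (k + 1) × Bool,
          ∫⁻ ω in {ω : Fin (k + 1) → ℝ | ω p.1 = cond p.2 ε (-ε)} ∩ closedBall 0 ε,
            ∫⁻ x in {x | x p'.1 = ω p'.1 + cond p'.2 ε (-ε)} ∩ closedBall 0 (2 * ε), G x ∂μH[k]
              ∂μH[k] := by
        gcongr with p
        rw [← lintegral_finsetSum _ fun p' _ => hmeas p']
        exact setLIntegral_mono' (measurableSet_setOf_apply_eq_inter_closedBall _ _ _)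
          fun ω hω => setLIntegral_sphere_le_sum_slices hε hω.2
    _ ≤ ∑ _p : Fin (k + 1) × Bool, ∑ _p' : Fin (k + 1) × Bool, B := by
        gcongr with p _ p'
        exact lintegral_face_slice_le hε hG p.1 p'.1 p.2 p'.2
    _ = (4 * (k + 1) ^ 2 : ℕ) * B := by
        simp only [Finset.sum_const, Finset.card_univ, Fintype.card_prod, Fintype.card_fin,
          Fintype.card_bool, nsmul_eq_mul]
        push_cast
        ring

end SphereSphere

theorem statement9_general (n : ℕ) :
    ∃ C : ℝ, 0 < C ∧ ∀ (ε : ℝ), 0 < ε → ∀ G : (Fin n → ℝ) → ℝ≥0∞, Measurable G →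
      (∫⁻ ω in {ω : Fin n → ℝ | ‖ω‖ = ε},
          (∫⁻ lam in {lam : Fin n → ℝ | ‖lam - ω‖ = ε}, G lam ∂(μH[(n : ℝ) - 1]))
            ∂(μH[(n : ℝ) - 1])) ≤
        ENNReal.ofReal C *
          (ENNReal.ofReal (ε ^ (n - 2)) * (∫⁻ lam in {lam : Fin n → ℝ | ‖lam‖ ≤ 2 * ε}, G lam) +
            ENNReal.ofReal (ε ^ (n - 1)) *
              ∑ j : Fin n, ∑ q ∈ ({-1, 0, 1} : Finset ℤ),
                ∫⁻ lam in {lam : Fin n → ℝ |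
                    lam j = 2 * (q : ℝ) * ε ∧ ∀ i, i ≠ j → |lam i| ≤ 2 * ε},
                  G lam ∂(μH[(n : ℝ) - 1])) := by
  obtain _ | k := n
  · refine ⟨1, one_pos, fun ε hε G _ => ?_⟩
    have hempty : {ω : Fin 0 → ℝ | ‖ω‖ = ε} = ∅ := eq_empty_of_forall_notMem
      fun ω (hω : ‖ω‖ = ε) => hε.ne (by rw [← hω, Subsingleton.elim ω 0, norm_zero])
    simp [hempty]
  set A : ℕ := 4 * (k + 1) ^ 2
  refine ⟨A * 2 ^ k, by positivity, fun ε hε G hG => ?_⟩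
  have hcoeff (m : ℕ) (hm : m ≤ k) :
      (A : ℝ≥0∞) * ENNReal.ofReal (2 * ε) ^ m ≤
        ENNReal.ofReal (A * 2 ^ k) * ENNReal.ofReal (ε ^ m) := by
    rw [← ENNReal.ofReal_natCast, ← ENNReal.ofReal_pow (by positivity),
      ← ENNReal.ofReal_mul (by positivity), ← ENNReal.ofReal_mul (by positivity), mul_pow,
      mul_assoc]
    gcongr
    exact one_le_two
  have hslice (j : Fin (k + 1)) (q : ℤ) :
      {x : Fin (k + 1) → ℝ | x j = 2 * q * ε} ∩ closedBall 0 (2 * ε) ⊆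
        {lam | lam j = 2 * q * ε ∧ ∀ i, i ≠ j → |lam i| ≤ 2 * ε} := fun x hx =>
    ⟨hx.1, fun i _ => (norm_le_pi_norm x i).trans (mem_closedBall_zero_iff.1 hx.2)⟩
  have hball : {lam : Fin (k + 1) → ℝ | ‖lam‖ ≤ 2 * ε} = closedBall 0 (2 * ε) := by
    ext; simp
  rw [Nat.cast_add_one, add_sub_cancel_right, show k + 1 - 2 = k - 1 by omega,
    Nat.add_sub_cancel, hball]
  calc _ = ∫⁻ ω in sphere 0 ε, ∫⁻ x in sphere ω ε, G x ∂μH[k] ∂μH[k] := by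
        simp [sphere, dist_eq_norm]
    _ ≤ _ := lintegral_sphere_sphere_le hε hG
    _ ≤ _ := by
      rw [mul_add, mul_add, ← mul_assoc, ← mul_assoc, ← mul_assoc, ← mul_assoc]
      gcongr ?_ * _ + ?_ * ∑ j, ∑ q ∈ _, ?_
      · exact hcoeff _ (Nat.sub_le k 1)
      · exact hcoeff _ le_rfl
      · exact lintegral_mono_set (hslice _ _)

/-- Let `n ≥ 2`.  There is a constant `C = C(n)` such that for every `ε > 0`
and every measurable `G : ℝⁿ → [0, ∞]`,
`H := ∫_{|ω| = ε} ∫_{|λ − ω| = ε} G(λ) dℋ^{n−1}(λ) dℋ^{n−1}(ω)` satisfies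
`H ≤ C (ε^{n−2} ∫_{|λ| ≤ 2ε} G(λ) dλ
      + ε^{n−1} Σ_{j=1}^n Σ_{q ∈ {−1,0,1}} ∫_{λ_j = 2qε, |λ̂_j| ≤ 2ε} G(λ) dℋ^{n−1}(λ))`,
with the sup norm (the norm of the Pi type `Fin n → ℝ`) throughout. -/
theorem statement9 (n : ℕ) (hn : 2 ≤ n) :
    ∃ C : ℝ, 0 < C ∧ ∀ (ε : ℝ), 0 < ε → ∀ G : (Fin n → ℝ) → ℝ≥0∞, Measurable G →
      (∫⁻ ω in {ω : Fin n → ℝ | ‖ω‖ = ε},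
          (∫⁻ lam in {lam : Fin n → ℝ | ‖lam - ω‖ = ε}, G lam ∂(μH[(n : ℝ) - 1]))
            ∂(μH[(n : ℝ) - 1])) ≤
        ENNReal.ofReal C *
          (ENNReal.ofReal (ε ^ (n - 2)) * (∫⁻ lam in {lam : Fin n → ℝ | ‖lam‖ ≤ 2 * ε}, G lam) +
            ENNReal.ofReal (ε ^ (n - 1)) *
              ∑ j : Fin n, ∑ q ∈ ({-1, 0, 1} : Finset ℤ),
                ∫⁻ lam in {lam : Fin n → ℝ |
                    lam j = 2 * (q : ℝ) * ε ∧ ∀ i, i ≠ j → |lam i| ≤ 2 * ε},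
                  G lam ∂(μH[(n : ℝ) - 1])) :=
  statement9_general n
end

section
/- Let n ≥ 1, 0 < s < 1, 1 ≤ p < ∞, and let 1 ≤ l ≤ n be an integer. There is a constant C = C(n, s, p) such that for every ε > 0 and every measurable f : ℝⁿ → ℝ^m, ∫_{ℝⁿ} dU ∫_{{λ' ∈ ℝ^l : |λ'_k| ≤ ε ∀k}} dλ' |f(U + Σ_{k=1}^{l} λ'_k e_k) − f(U)|^p / |λ'|^{l+sp} ≤ C ∫_{ℝⁿ} dU ∫_{{λ ∈ ℝⁿ : |λ| ≤ 2ε}} dλ |f(U + λ) − f(U)|^p / |λ|^{n+sp}, where e_1, …, e_n is the standard basis of ℝⁿ. -/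
open MeasureTheory Filter Topology ENNReal

noncomputable section

abbrev EucSp (m : ℕ) := EuclideanSpace ℝ (Fin m)

open Metric Set Function

/-!
Let `G h = ∫ ‖f (U + h) - f U‖ ^ p dU`. The triangle inequality and translation invariance give
`G (a + b) ≤ 2 ^ (p - 1) (G a + G b)`. For `x ∈ ℝ^l` let `B_x` be the ball of radius `‖x‖ / 4`
about the midpoint of `0` and the embedded point `φ x ∈ ℝⁿ`; it is symmetric under `z ↦ φ x - z`,
so writing `φ x = (φ x - z) + z` and averaging over `z ∈ B_x` bounds `G (φ x)` by `2 ^ p` times the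
mean of `G` over `B_x`. Every `z ∈ B_x` satisfies `‖x‖ / 4 ≤ ‖z‖ ≤ ‖x‖`, so after exchanging the
integrals the weight `‖x‖ ^ (-(l + s p)) / |B_x|` integrated over the admissible `x` (a set of
volume `≈ ‖z‖ ^ l`, with `|B_x| ≈ ‖z‖ ^ n`) is at most a constant times `‖z‖ ^ (-(n + s p))`.
-/

section TranslationModulus

variable {E F : Type*} [AddGroup E] [MeasurableSpace E] [NormedAddCommGroup F]

def translationModulus (μ : Measure E) (p : ℝ) (f : E → F) (h : E) : ℝ≥0∞ :=
  ∫⁻ U, (‖f (U + h) - f U‖₊ : ℝ≥0∞) ^ p ∂μ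

variable (μ : Measure E) {p : ℝ} {f : E → F}

theorem translationModulus_zero (hp : 0 < p) : translationModulus μ p f 0 = 0 := by
  simp [translationModulus, ENNReal.zero_rpow_of_pos hp]

theorem translationModulus_add_le [MeasurableAdd E] [μ.IsAddRightInvariant] [MeasurableSpace F]
    [BorelSpace F] [SecondCountableTopology F] (hf : Measurable f) (hp : 1 ≤ p) (a b : E) :
    translationModulus μ p f (a + b) ≤
      2 ^ (p - 1) * (translationModulus μ p f a + translationModulus μ p f b) := by
  have hfirst : Measurable fun U => (‖f (U + a + b) - f (U + a)‖₊ : ℝ≥0∞) ^ p := by fun_prop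
  calc translationModulus μ p f (a + b)
      ≤ ∫⁻ U, 2 ^ (p - 1) * ((‖f (U + a + b) - f (U + a)‖₊ : ℝ≥0∞) ^ p
          + (‖f (U + a) - f U‖₊ : ℝ≥0∞) ^ p) ∂μ := by
        refine lintegral_mono fun U => ?_
        have htri : (‖f (U + a + b) - f U‖₊ : ℝ≥0∞) ≤
            ‖f (U + a + b) - f (U + a)‖₊ + ‖f (U + a) - f U‖₊ := by
          exact_mod_cast norm_sub_le_norm_sub_add_norm_sub _ (f (U + a)) _
        rw [← add_assoc]
        exact (ENNReal.rpow_le_rpow htri (by linarith)).trans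
          (ENNReal.rpow_add_le_mul_rpow_add_rpow _ _ hp)
    _ = 2 ^ (p - 1) * (translationModulus μ p f b + translationModulus μ p f a) := by
        rw [lintegral_const_mul' _ _ (by simp), lintegral_add_left hfirst]
        congr 2
        exact lintegral_add_right_eq_self (fun U => (‖f (U + b) - f U‖₊ : ℝ≥0∞) ^ p) a
    _ = _ := by rw [add_comm (translationModulus μ p f b)]

theorem measurable_translationModulus [MeasurableAdd₂ E] [SFinite μ] [MeasurableSpace F]
    [BorelSpace F] [SecondCountableTopology F] (hf : Measurable f) :
    Measurable (translationModulus μ p f) := by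
  have : Measurable fun q : E × E => (‖f (q.2 + q.1) - f q.2‖₊ : ℝ≥0∞) ^ p := by fun_prop
  exact this.lintegral_prod_right'

theorem lintegral_setLIntegral_rpow_nnnorm_sub_div [MeasurableAdd₂ E] [SFinite μ]
    [MeasurableSpace F] [BorelSpace F] [SecondCountableTopology F] {X : Type*} [MeasurableSpace X]
    (ν : Measure X) [SFinite ν] {ψ : X → E} (hψ : Measurable ψ) {w : X → ℝ≥0∞} (hw : Measurable w)
    (S : Set X) (hf : Measurable f) :
    ∫⁻ U, ∫⁻ x in S, (‖f (U + ψ x) - f U‖₊ : ℝ≥0∞) ^ p / w x ∂ν ∂μ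
      = ∫⁻ x in S, translationModulus μ p f (ψ x) / w x ∂ν := by
  rw [lintegral_lintegral_swap (by fun_prop)]
  refine lintegral_congr fun x => ?_
  simp_rw [div_eq_mul_inv]
  exact lintegral_mul_const _ (by fun_prop)

end TranslationModulus

theorem mul_measure_le_two_mul_setLIntegral {E : Type*} [AddGroup E] [MeasurableSpace E]
    [MeasurableAdd E] [MeasurableNeg E] (μ : Measure E) [μ.IsAddLeftInvariant] [μ.IsNegInvariant]
    {G : E → ℝ≥0∞} (hG : Measurable G) {K : ℝ≥0∞} (hK : ∀ a b, G (a + b) ≤ K * (G a + G b))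
    {y : E} {S : Set E} (hS : MeasurableSet S) (hSy : (fun z => y - z) ⁻¹' S = S) :
    G y * μ S ≤ 2 * K * ∫⁻ z in S, G z ∂μ := by
  have hreflect : ∫⁻ z in S, G (y - z) ∂μ = ∫⁻ z in S, G z ∂μ := by
    conv_lhs => rw [← hSy]
    exact (Measure.measurePreserving_sub_left μ y).setLIntegral_comp_preimage hS hG
  calc G y * μ S = ∫⁻ _ in S, G y ∂μ := (setLIntegral_const S _).symm
    _ ≤ ∫⁻ z in S, K * (G (y - z) + G z) ∂μ :=
        lintegral_mono fun z => by simpa using hK (y - z) z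
    _ = 2 * K * ∫⁻ z in S, G z ∂μ := by
        rw [lintegral_const_mul _ (by fun_prop), lintegral_add_left (by fun_prop), hreflect]
        ring

theorem norm_sum_smul_single_of_injective {ι κ : Type*} [Fintype ι] [Fintype κ] [DecidableEq κ]
    {e : ι → κ} (he : Injective e) (x : ι → ℝ) :
    ‖∑ k, x k • (Pi.single (e k) (1 : ℝ) : κ → ℝ)‖ = ‖x‖ := by
  set v : κ → ℝ := ∑ k, x k • Pi.single (e k) 1
  have hv : ∀ j, v j = ∑ k, if j = e k then x k else 0 := fun j => by
    simp [v, Finset.sum_apply, Pi.single_apply]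
  have hv_image : ∀ k, v (e k) = x k := fun k => by
    rw [hv, Finset.sum_eq_single k (fun k' _ hk => if_neg (he.ne hk.symm)) (by simp), if_pos rfl]
  have hv_off : ∀ j, (∀ k, j ≠ e k) → v j = 0 := fun j hj => by simp [hv, hj]
  refine le_antisymm ((pi_norm_le_iff_of_nonneg (norm_nonneg x)).2 fun j => ?_)
    ((pi_norm_le_iff_of_nonneg (norm_nonneg v)).2 fun k => hv_image k ▸ norm_le_pi_norm v (e k))
  by_cases hj : ∃ k, j = e k
  · obtain ⟨k, rfl⟩ := hj
    exact hv_image k ▸ norm_le_pi_norm x k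
  · simp [hv_off j (not_exists.1 hj)]

theorem norm_le_four_mul_and_norm_le_of_dist_half_le {E : Type*} [SeminormedAddCommGroup E]
    [NormedSpace ℝ E] {y z : E} (h : dist z ((2⁻¹ : ℝ) • y) ≤ ‖y‖ / 4) :
    ‖y‖ ≤ 4 * ‖z‖ ∧ ‖z‖ ≤ ‖y‖ := by
  have hhalf : ‖(2⁻¹ : ℝ) • y‖ = ‖y‖ / 2 := by
    rw [norm_smul, Real.norm_of_nonneg (by norm_num)]; ring
  have := abs_le.1 ((abs_norm_sub_norm_le z ((2⁻¹ : ℝ) • y)).trans (dist_eq_norm z _ ▸ h))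
  constructor <;> linarith [this.1, this.2]

def shellWeight (n : ℕ) (α r : ℝ) : ℝ≥0∞ :=
  (ENNReal.ofReal r ^ α)⁻¹ / volume (closedBall (0 : Fin n → ℝ) (r / 4))

section ShellKernel

variable {l n : ℕ}

def shellKernel (φ : (Fin l → ℝ) → Fin n → ℝ) (α : ℝ) (x : Fin l → ℝ) (z : Fin n → ℝ) : ℝ≥0∞ :=
  (closedBall ((2⁻¹ : ℝ) • φ x) (‖x‖ / 4)).indicator (fun _ => shellWeight n α ‖x‖) z

theorem measurable_shellWeight (α : ℝ) : Measurable (shellWeight n α) :=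
  (by fun_prop : Measurable fun r : ℝ => (ENNReal.ofReal r ^ α)⁻¹).div
    (Monotone.measurable fun _ _ h => measure_mono (closedBall_subset_closedBall (by linarith)))

theorem antitone_shellWeight {α : ℝ} (hα : 0 ≤ α) : Antitone (shellWeight n α) := fun r r' h =>
  ENNReal.div_le_div (ENNReal.inv_le_inv.2 (ENNReal.rpow_le_rpow (ENNReal.ofReal_le_ofReal h) hα))
    (measure_mono (closedBall_subset_closedBall (by linarith)))

theorem shellWeight_mul_volume_closedBall {r : ℝ} (hr : 0 < r) (t : ℝ) :
    shellWeight n (l + t) r * volume (closedBall (0 : Fin l → ℝ) (4 * r))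
      = ENNReal.ofReal (8 ^ l * 2 ^ n) / ENNReal.ofReal r ^ (n + t) := by
  rw [shellWeight, Real.volume_pi_closedBall _ (by positivity),
    Real.volume_pi_closedBall _ (by positivity), Fintype.card_fin, Fintype.card_fin,
    ENNReal.ofReal_rpow_of_pos hr, ENNReal.ofReal_rpow_of_pos hr,
    ← ENNReal.ofReal_inv_of_pos (by positivity), ← ENNReal.ofReal_div_of_pos (by positivity),
    ← ENNReal.ofReal_mul (by positivity), ← ENNReal.ofReal_div_of_pos (by positivity)]
  congr 1
  rw [Real.rpow_add hr, Real.rpow_add hr, Real.rpow_natCast, Real.rpow_natCast,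
    show 2 * (r / 4) = r / 2 by ring, show 2 * (4 * r) = 8 * r by ring, div_pow, mul_pow]
  field_simp

variable {φ : (Fin l → ℝ) → Fin n → ℝ}

theorem measurable_uncurry_shellKernel (hφ : Measurable φ) (α : ℝ) :
    Measurable (uncurry (shellKernel φ α)) := by
  have hset : MeasurableSet {q : (Fin l → ℝ) × (Fin n → ℝ) |
      dist q.2 ((2⁻¹ : ℝ) • φ q.1) ≤ ‖q.1‖ / 4} :=
    measurableSet_le (by fun_prop) (by fun_prop)
  exact ((measurable_shellWeight α).comp (by fun_prop)).indicator hset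

theorem mul_le_lintegral_shellKernel (hφ0 : φ 0 = 0) {G : (Fin n → ℝ) → ℝ≥0∞}
    (hG : Measurable G) (hG0 : G 0 = 0) {K : ℝ≥0∞} (hK : ∀ a b, G (a + b) ≤ K * (G a + G b))
    (α : ℝ) (x : Fin l → ℝ) :
    G (φ x) / ENNReal.ofReal ‖x‖ ^ α ≤ 2 * K * ∫⁻ z, shellKernel φ α x z * G z := by
  rcases eq_or_ne x 0 with rfl | hx
  · rw [hφ0, hG0, ENNReal.zero_div]
    exact bot_le
  set c : Fin n → ℝ := (2⁻¹ : ℝ) • φ x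
  set B := closedBall c (‖x‖ / 4)
  have hB : volume B = volume (closedBall (0 : Fin n → ℝ) (‖x‖ / 4)) :=
    Measure.addHaar_closedBall_center _ _ _
  have hB0 : volume B ≠ 0 := (measure_closedBall_pos _ _ (by positivity)).ne'
  have hBtop : volume B ≠ ⊤ := measure_closedBall_lt_top.ne
  have hsymm : (fun z => φ x - z) ⁻¹' B = B := by
    have hc : φ x = c + c := by rw [← two_smul ℝ c, smul_smul]; norm_num [c]
    ext z
    simp only [B, mem_preimage, mem_closedBall, dist_eq_norm]
    rw [hc, show c + c - z - c = -(z - c) by abel, norm_neg]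
  have havg := mul_measure_le_two_mul_setLIntegral volume hG hK measurableSet_closedBall hsymm
  have hkernel : ∫⁻ z, shellKernel φ α x z * G z =
      shellWeight n α ‖x‖ * ∫⁻ z in B, G z := by
    simp_rw [shellKernel, ← indicator_mul_left]
    rw [lintegral_indicator measurableSet_closedBall, lintegral_const_mul _ hG]
  rw [hkernel, shellWeight, ← hB]
  calc G (φ x) / ENNReal.ofReal ‖x‖ ^ α
      = G (φ x) * (ENNReal.ofReal ‖x‖ ^ α)⁻¹ * (volume B * (volume B)⁻¹) := by
        rw [ENNReal.mul_inv_cancel hB0 hBtop, mul_one, div_eq_mul_inv]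
    _ = G (φ x) * volume B * ((ENNReal.ofReal ‖x‖ ^ α)⁻¹ / volume B) := by
        rw [div_eq_mul_inv]; ring
    _ ≤ 2 * K * (∫⁻ z in B, G z) * ((ENNReal.ofReal ‖x‖ ^ α)⁻¹ / volume B) := by
        gcongr
    _ = _ := by ring

theorem shellKernel_le_indicator (hφ : ∀ x, ‖φ x‖ = ‖x‖) {t : ℝ} (ht : 0 ≤ t)
    (x : Fin l → ℝ) (z : Fin n → ℝ) :
    shellKernel φ (l + t) x z ≤
      (closedBall (0 : Fin l → ℝ) (4 * ‖z‖)).indicator (fun _ => shellWeight n (l + t) ‖z‖) x := by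
  by_cases hz : z ∈ closedBall ((2⁻¹ : ℝ) • φ x) (‖x‖ / 4)
  · obtain ⟨hx4, hzx⟩ := norm_le_four_mul_and_norm_le_of_dist_half_le (hφ x ▸ hz)
    rw [shellKernel, indicator_of_mem hz, indicator_of_mem (by simpa [hφ] using hx4)]
    exact antitone_shellWeight (by positivity) (hφ x ▸ hzx)
  · rw [shellKernel, indicator_of_notMem hz]
    exact bot_le

theorem setLIntegral_shellKernel_le (hφ : ∀ x, ‖φ x‖ = ‖x‖) {t : ℝ} (ht : 0 < t) (ε : ℝ)
    (z : Fin n → ℝ) :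
    ∫⁻ x in closedBall 0 ε, shellKernel φ (l + t) x z ≤
      (closedBall (0 : Fin n → ℝ) ε).indicator
        (fun z => ENNReal.ofReal (8 ^ l * 2 ^ n) / ENNReal.ofReal ‖z‖ ^ (n + t)) z := by
  by_cases hzε : z ∈ closedBall 0 ε
  · rw [indicator_of_mem hzε]
    rcases eq_or_ne z 0 with rfl | hz
    · rw [norm_zero, ENNReal.ofReal_zero, ENNReal.zero_rpow_of_pos (by positivity),
        ENNReal.div_zero (by simp)]
      exact le_top
    calc ∫⁻ x in closedBall 0 ε, shellKernel φ (l + t) x z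
        ≤ ∫⁻ x, (closedBall (0 : Fin l → ℝ) (4 * ‖z‖)).indicator
            (fun _ => shellWeight n (l + t) ‖z‖) x :=
          (setLIntegral_le_lintegral _ _).trans
            (lintegral_mono fun x => shellKernel_le_indicator hφ ht.le x z)
      _ = _ := by
        rw [lintegral_indicator_const measurableSet_closedBall,
          shellWeight_mul_volume_closedBall (norm_pos_iff.2 hz)]
  · have hvanish : ∀ x ∈ closedBall (0 : Fin l → ℝ) ε, shellKernel φ (l + t) x z = 0 := by
      intro x hx
      refine indicator_of_notMem (fun hz => hzε ?_) _
      have hzx := (norm_le_four_mul_and_norm_le_of_dist_half_le (hφ x ▸ hz)).2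
      rw [mem_closedBall_zero_iff] at hx ⊢
      linarith [hφ x]
    rw [indicator_of_notMem hzε, setLIntegral_congr_fun measurableSet_closedBall hvanish,
      lintegral_zero]

theorem setLIntegral_comp_div_rpow_le (hφm : Measurable φ) (hφ : ∀ x, ‖φ x‖ = ‖x‖)
    {G : (Fin n → ℝ) → ℝ≥0∞} (hG : Measurable G) (hG0 : G 0 = 0) {K : ℝ≥0∞}
    (hK : ∀ a b, G (a + b) ≤ K * (G a + G b)) {t : ℝ} (ht : 0 < t) (ε : ℝ) :
    ∫⁻ x in closedBall 0 ε, G (φ x) / ENNReal.ofReal ‖x‖ ^ (l + t) ≤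
      2 * K * ENNReal.ofReal (8 ^ l * 2 ^ n) *
        ∫⁻ z in closedBall 0 ε, G z / ENNReal.ofReal ‖z‖ ^ (n + t) := by
  have hkG : Measurable (uncurry fun x z => shellKernel φ (l + t) x z * G z) :=
    (measurable_uncurry_shellKernel hφm _).mul (hG.comp measurable_snd)
  have hinner : Measurable fun x => ∫⁻ z, shellKernel φ (l + t) x z * G z :=
    hkG.lintegral_prod_right'
  calc ∫⁻ x in closedBall 0 ε, G (φ x) / ENNReal.ofReal ‖x‖ ^ (l + t)
      ≤ ∫⁻ x in closedBall 0 ε, 2 * K * ∫⁻ z, shellKernel φ (l + t) x z * G z :=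
        lintegral_mono fun x =>
          mul_le_lintegral_shellKernel (norm_eq_zero.1 ((hφ 0).trans norm_zero)) hG hG0 hK _ x
    _ = 2 * K * ∫⁻ z, (∫⁻ x in closedBall 0 ε, shellKernel φ (l + t) x z) * G z := by
        rw [lintegral_const_mul _ hinner, lintegral_lintegral_swap hkG.aemeasurable]
        congr 1
        exact lintegral_congr fun z =>
          lintegral_mul_const _ (measurable_uncurry_shellKernel hφm _).of_uncurry_right
    _ ≤ 2 * K * ∫⁻ z, (closedBall (0 : Fin n → ℝ) ε).indicator
          (fun z => ENNReal.ofReal (8 ^ l * 2 ^ n) / ENNReal.ofReal ‖z‖ ^ (n + t)) z * G z := by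
        gcongr with z
        exact setLIntegral_shellKernel_le hφ ht ε z
    _ = _ := by
        simp_rw [← indicator_mul_left]
        rw [lintegral_indicator measurableSet_closedBall, mul_assoc (2 * K),
          ← lintegral_const_mul' _ _ ENNReal.ofReal_ne_top]
        congr 1
        refine lintegral_congr fun z => ?_
        simp only [div_eq_mul_inv]
        ring

end ShellKernel

theorem two_mul_two_rpow_sub_one_mul_le {p : ℝ} {l n : ℕ} (hln : l ≤ n) :
    2 * 2 ^ (p - 1) * ENNReal.ofReal (8 ^ l * 2 ^ n) ≤ ENNReal.ofReal (2 ^ p * 16 ^ n) := by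
  have h2p : (2 : ℝ≥0∞) * 2 ^ (p - 1) = ENNReal.ofReal (2 ^ p) := by
    rw [← ENNReal.ofReal_rpow_of_pos two_pos, ENNReal.ofReal_ofNat, ← add_sub_cancel 1 p,
      ENNReal.rpow_add _ _ two_ne_zero ofNat_ne_top, ENNReal.rpow_one, add_sub_cancel_left]
  have h16 : (8 : ℝ) ^ l * 2 ^ n ≤ 16 ^ n :=
    calc (8 : ℝ) ^ l * 2 ^ n ≤ 8 ^ n * 2 ^ n := by gcongr; norm_num
      _ = 16 ^ n := by rw [← mul_pow]; norm_num
  rw [h2p, ← ENNReal.ofReal_mul (by positivity)]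
  exact ENNReal.ofReal_le_ofReal (mul_le_mul_of_nonneg_left h16 (by positivity))

theorem statement10_general (n m : ℕ) (s p : ℝ)
    (hs0 : 0 < s) (hp : 1 ≤ p)
    (l : ℕ) (hln : l ≤ n) :
    ∃ C : ℝ, 0 < C ∧ ∀ (ε : ℝ), 0 < ε →
      ∀ f : (Fin n → ℝ) → EucSp m, Measurable f →
      (∫⁻ U : Fin n → ℝ, ∫⁻ lam in {lam : Fin l → ℝ | ∀ k, |lam k| ≤ ε},
          (‖f (U + ∑ k : Fin l, lam k • (Pi.single (Fin.castLE hln k) (1 : ℝ) : Fin n → ℝ)) - f U‖₊ : ℝ≥0∞) ^ p /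
            (ENNReal.ofReal ‖lam‖) ^ ((l : ℝ) + s * p)) ≤
        ENNReal.ofReal C *
          ∫⁻ U : Fin n → ℝ, ∫⁻ lam in {lam : Fin n → ℝ | ‖lam‖ ≤ 2 * ε},
            (‖f (U + lam) - f U‖₊ : ℝ≥0∞) ^ p /
              (ENNReal.ofReal ‖lam‖) ^ ((n : ℝ) + s * p) := by
  refine ⟨2 ^ p * 16 ^ n, by positivity, fun ε hε f hf => ?_⟩
  set G := translationModulus volume p f
  have hball_l : {x : Fin l → ℝ | ∀ k, |x k| ≤ ε} = closedBall 0 ε := by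
    ext x; simp [pi_norm_le_iff_of_nonneg hε.le]
  have hball_n : {z : Fin n → ℝ | ‖z‖ ≤ 2 * ε} = closedBall 0 (2 * ε) := by
    ext z; simp
  rw [lintegral_setLIntegral_rpow_nnnorm_sub_div volume volume (by fun_prop) (by fun_prop) _ hf,
    lintegral_setLIntegral_rpow_nnnorm_sub_div volume volume (ψ := fun z => z) measurable_id'
      (by fun_prop) _ hf,
    hball_l, hball_n]
  calc _ ≤ 2 * 2 ^ (p - 1) * ENNReal.ofReal (8 ^ l * 2 ^ n) *
          ∫⁻ z in closedBall 0 ε, G z / ENNReal.ofReal ‖z‖ ^ ((n : ℝ) + s * p) :=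
        setLIntegral_comp_div_rpow_le (by fun_prop)
          (norm_sum_smul_single_of_injective (Fin.castLE_injective hln))
          (measurable_translationModulus _ hf) (translationModulus_zero _ (by linarith))
          (translationModulus_add_le _ hf hp) (by positivity) ε
    _ ≤ ENNReal.ofReal (2 ^ p * 16 ^ n) *
          ∫⁻ z in closedBall 0 (2 * ε), G z / ENNReal.ofReal ‖z‖ ^ ((n : ℝ) + s * p) := by
        gcongr
        · exact two_mul_two_rpow_sub_one_mul_le hln
        · linarith

/-- Let `n ≥ 1`, `0 < s < 1`, `1 ≤ p < ∞` and `1 ≤ l ≤ n`.  There is a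
constant `C = C(n, s, p)` such that for every `ε > 0` and every measurable `f : ℝⁿ → ℝ^m`,
`∫_{ℝⁿ} dU ∫_{|λ'_k| ≤ ε ∀k} dλ' |f(U + Σ_k λ'_k e_k) − f(U)|^p / |λ'|^{l+sp}
  ≤ C ∫_{ℝⁿ} dU ∫_{|λ| ≤ 2ε} dλ |f(U + λ) − f(U)|^p / |λ|^{n+sp}`,
with the sup norm (the norm of the Pi type) on `ℝ^l` and `ℝⁿ`. -/
theorem statement10 (n m : ℕ) (hn : 1 ≤ n) (s p : ℝ)
    (hs0 : 0 < s) (hs1 : s < 1) (hp : 1 ≤ p)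
    (l : ℕ) (hl1 : 1 ≤ l) (hln : l ≤ n) :
    ∃ C : ℝ, 0 < C ∧ ∀ (ε : ℝ), 0 < ε →
      ∀ f : (Fin n → ℝ) → EucSp m, Measurable f →
      (∫⁻ U : Fin n → ℝ, ∫⁻ lam in {lam : Fin l → ℝ | ∀ k, |lam k| ≤ ε},
          (‖f (U + ∑ k : Fin l, lam k • (Pi.single (Fin.castLE hln k) (1 : ℝ) : Fin n → ℝ)) - f U‖₊ : ℝ≥0∞) ^ p /
            (ENNReal.ofReal ‖lam‖) ^ ((l : ℝ) + s * p)) ≤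
        ENNReal.ofReal C *
          ∫⁻ U : Fin n → ℝ, ∫⁻ lam in {lam : Fin n → ℝ | ‖lam‖ ≤ 2 * ε},
            (‖f (U + lam) - f U‖₊ : ℝ≥0∞) ^ p /
              (ENNReal.ofReal ‖lam‖) ^ ((n : ℝ) + s * p) :=
  statement10_general n m s p hs0 hp l hln
end
end

section
/- Let n ≥ 1, 0 < s < 1 and 1 ≤ p < ∞ with sp < n, and let L ∈ ℤⁿ with |L| = 1 (sup norm). There is a constant C = C(n, s, p) such that for every ε > 0 and all ω, σ ∈ ℝⁿ with |ω| = |σ| = 1 (sup norm), the kernel k(ω, σ) := ∫₀^ε ∫₀^ε δ^{n−1} λ^{n−1} / |δω − λσ − 2εL|^{n+sp} dδ dλ satisfies k(ω, σ) ≤ C ε^{n−sp} / |ω − σ − 2L|^{n+sp−1}. -/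
/-!
Write `D = |δω - λσ - 2εL|` and `A = |ω - σ - 2L|`. Since `|2εL| = 2ε`, the triangle inequality
gives `D ≥ (ε - δ) + (ε - λ)` and `εA ≤ D + (ε - δ) + (ε - λ)`, hence `D ≥ εA/2` and
`D ≥ √((ε - δ)(ε - λ))`. Splitting `D^(n+sp) = D^(n+sp-1) · D` accordingly bounds the integrand by
`ε^(2n-2) (εA/2)^(1-n-sp) (ε - δ)^(-1/2) (ε - λ)^(-1/2)`, which is separable, and
`∫₀^ε (ε - x)^(-1/2) dx = 2√ε` gives the claim with `C = 2^(n+sp+1)`.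
-/

open MeasureTheory ENNReal

theorem lintegral_Ioo_sub_rpow {a b r : ℝ} (hab : a ≤ b) (hr : -1 < r) :
    ∫⁻ x in Set.Ioo a b, ENNReal.ofReal ((b - x) ^ r) =
      ENNReal.ofReal ((b - a) ^ (r + 1) / (r + 1)) := by
  have hint : IntegrableOn (fun x => (b - x) ^ r) (Set.Ioo a b) := by
    rw [← intervalIntegrable_iff_integrableOn_Ioo_of_le hab]
    simpa using
      ((intervalIntegral.intervalIntegrable_rpow' (a := 0) (b := b - a) hr).comp_sub_left b).symm
  rw [← ofReal_integral_eq_lintegral_ofReal hint, ← integral_Ioc_eq_integral_Ioo,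
    ← intervalIntegral.integral_of_le hab,
    intervalIntegral.integral_comp_sub_left (fun x => x ^ r),
    sub_self, integral_rpow (Or.inl hr), Real.zero_rpow (by linarith), sub_zero]
  filter_upwards [ae_restrict_mem measurableSet_Ioo] with x hx
  exact Real.rpow_nonneg (sub_nonneg.2 hx.2.le) r

theorem lintegral_lintegral_le_mul_of_le {α β : Type*} [MeasurableSpace α] [MeasurableSpace β]
    {μ : Measure α} {ν : Measure β} {s : Set α} {t : Set β} (hs : MeasurableSet s)
    (ht : MeasurableSet t) {F : α → β → ℝ≥0∞} {f : α → ℝ≥0∞} {g : β → ℝ≥0∞}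
    (hf : AEMeasurable f (μ.restrict s)) (hg : AEMeasurable g (ν.restrict t)) (K : ℝ≥0∞)
    (hF : ∀ x ∈ s, ∀ y ∈ t, F x y ≤ K * (f x * g y)) :
    ∫⁻ x in s, ∫⁻ y in t, F x y ∂ν ∂μ ≤ K * ((∫⁻ x in s, f x ∂μ) * ∫⁻ y in t, g y ∂ν) :=
  calc ∫⁻ x in s, ∫⁻ y in t, F x y ∂ν ∂μ ≤ ∫⁻ x in s, ∫⁻ y in t, K * f x * g y ∂ν ∂μ :=
        setLIntegral_mono' hs fun x hx ↦ setLIntegral_mono' ht fun y hy ↦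
          (hF x hx y hy).trans_eq (mul_assoc _ _ _).symm
    _ = K * ((∫⁻ x in s, f x ∂μ) * ∫⁻ y in t, g y ∂ν) := by
        rw [lintegral_lintegral_mul (hf.const_mul K) hg, lintegral_const_mul'' K hf, mul_assoc]

theorem rpow_sub_one_mul_sqrt_mul_le_rpow {a u v D q : ℝ} (ha : 0 ≤ a) (hu : 0 ≤ u)
    (haD : a ≤ D) (huD : u ≤ D) (hvD : v ≤ D) (hq : 1 ≤ q) :
    a ^ (q - 1) * √(u * v) ≤ D ^ q := by
  have hD : 0 ≤ D := ha.trans haD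
  have hsqrt : √(u * v) ≤ D := Real.sqrt_le_iff.2 ⟨hD, by nlinarith⟩
  calc a ^ (q - 1) * √(u * v) ≤ D ^ (q - 1) * D := by
        gcongr
    _ = D ^ q := by
        rw [← Real.rpow_add_one' hD (by linarith), sub_add_cancel]

section Geometry

variable {E : Type*} [SeminormedAddCommGroup E] [NormedSpace ℝ E] {ω σ ℓ : E} {ε δ lam : ℝ}

theorem two_mul_sub_sub_le_norm_smul_sub (hω : ‖ω‖ ≤ 1) (hσ : ‖σ‖ ≤ 1) (hℓ : ‖ℓ‖ = 1)
    (hε : 0 ≤ ε) (hδ : 0 ≤ δ) (hlam : 0 ≤ lam) :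
    2 * ε - δ - lam ≤ ‖δ • ω - lam • σ - (2 * ε) • ℓ‖ := by
  have hsmul : ‖δ • ω - lam • σ‖ ≤ δ + lam := by
    refine (norm_sub_le _ _).trans ?_
    rw [norm_smul_of_nonneg hδ, norm_smul_of_nonneg hlam]
    nlinarith
  have := norm_sub_norm_le ((2 * ε) • ℓ) (δ • ω - lam • σ)
  rw [norm_smul, hℓ, mul_one, Real.norm_of_nonneg (by linarith),
    norm_sub_rev ((2 * ε) • ℓ)] at this
  linarith

theorem mul_norm_le_norm_smul_sub_add (hω : ‖ω‖ ≤ 1) (hσ : ‖σ‖ ≤ 1) (hε : 0 ≤ ε) (hδ : δ ≤ ε)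
    (hlam : lam ≤ ε) :
    ε * ‖ω - σ - (2 : ℝ) • ℓ‖ ≤ ‖δ • ω - lam • σ - (2 * ε) • ℓ‖ + (2 * ε - δ - lam) := by
  calc ε * ‖ω - σ - (2 : ℝ) • ℓ‖
      = ‖(δ • ω - lam • σ - (2 * ε) • ℓ) + ((ε - δ) • ω - (ε - lam) • σ)‖ := by
        rw [← norm_smul_of_nonneg hε]
        congr 1
        module
    _ ≤ ‖δ • ω - lam • σ - (2 * ε) • ℓ‖ + (‖(ε - δ) • ω‖ + ‖(ε - lam) • σ‖) :=
        (norm_add_le _ _).trans (by gcongr; exact norm_sub_le _ _)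
    _ = ‖δ • ω - lam • σ - (2 * ε) • ℓ‖ + ((ε - δ) * ‖ω‖ + (ε - lam) * ‖σ‖) := by
        rw [norm_smul_of_nonneg (by linarith), norm_smul_of_nonneg (by linarith)]
    _ ≤ ‖δ • ω - lam • σ - (2 * ε) • ℓ‖ + (2 * ε - δ - lam) := by
        gcongr
        nlinarith

theorem ofReal_div_norm_rpow_le (hω : ‖ω‖ ≤ 1) (hσ : ‖σ‖ ≤ 1) (hℓ : ‖ℓ‖ = 1)
    (hA : 0 < ‖ω - σ - (2 : ℝ) • ℓ‖) {q : ℝ} (hq : 1 ≤ q) (m : ℕ) (hδ : δ ∈ Set.Ioo 0 ε)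
    (hlam : lam ∈ Set.Ioo 0 ε) :
    ENNReal.ofReal (δ ^ m * lam ^ m) / ENNReal.ofReal ‖δ • ω - lam • σ - (2 * ε) • ℓ‖ ^ q ≤
      ENNReal.ofReal (ε ^ m * ε ^ m / (ε * ‖ω - σ - (2 : ℝ) • ℓ‖ / 2) ^ (q - 1)) *
        (ENNReal.ofReal ((ε - δ) ^ (-(1 / 2) : ℝ)) *
          ENNReal.ofReal ((ε - lam) ^ (-(1 / 2) : ℝ))) := by
  set A := ‖ω - σ - (2 : ℝ) • ℓ‖
  set D := ‖δ • ω - lam • σ - (2 * ε) • ℓ‖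
  obtain ⟨hδ0, hδε⟩ := hδ
  obtain ⟨hlam0, hlamε⟩ := hlam
  have hε : 0 < ε := hδ0.trans hδε
  have hD₁ := two_mul_sub_sub_le_norm_smul_sub hω hσ hℓ hε.le hδ0.le hlam0.le
  have hD₂ := mul_norm_le_norm_smul_sub_add (ℓ := ℓ) hω hσ hε.le hδε.le hlamε.le
  have hAD : ε * A / 2 ≤ D := by linarith
  have hD : 0 < D := hAD.trans_lt' (by positivity)
  have hDq : (ε * A / 2) ^ (q - 1) * √((ε - δ) * (ε - lam)) ≤ D ^ q :=
    rpow_sub_one_mul_sqrt_mul_le_rpow (by positivity) (by linarith) hAD (by linarith)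
      (by linarith) hq
  rw [ENNReal.ofReal_rpow_of_pos hD, ← ENNReal.ofReal_div_of_pos (by positivity),
    ← ENNReal.ofReal_mul (by positivity), ← ENNReal.ofReal_mul (by positivity)]
  refine ENNReal.ofReal_le_ofReal ?_
  calc δ ^ m * lam ^ m / D ^ q
      ≤ ε ^ m * ε ^ m / ((ε * A / 2) ^ (q - 1) * √((ε - δ) * (ε - lam))) := by
        gcongr
    _ = _ := by
        rw [Real.sqrt_mul (by linarith), Real.sqrt_eq_rpow, Real.sqrt_eq_rpow,
          Real.rpow_neg (by linarith), Real.rpow_neg (by linarith)]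
        field_simp

end Geometry

theorem statement11_general (n : ℕ) (hn : 1 ≤ n) (s p : ℝ)
    (hs0 : 0 < s) (hp : 1 ≤ p) :
    ∃ C : ℝ, 0 < C ∧ ∀ (L : Fin n → ℤ), ‖(fun i => (L i : ℝ))‖ = 1 →
      ∀ (ε : ℝ), 0 < ε → ∀ (ω σ : Fin n → ℝ), ‖ω‖ = 1 → ‖σ‖ = 1 →
      (∫⁻ δ in Set.Ioo (0 : ℝ) ε, ∫⁻ lam in Set.Ioo (0 : ℝ) ε,
          ENNReal.ofReal (δ ^ (n - 1) * lam ^ (n - 1)) /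
            (ENNReal.ofReal ‖δ • ω - lam • σ - (2 * ε) • (fun i => (L i : ℝ))‖) ^
              ((n : ℝ) + s * p)) ≤
        ENNReal.ofReal (C * ε ^ ((n : ℝ) - s * p)) /
          (ENNReal.ofReal ‖ω - σ - (2 : ℝ) • (fun i => (L i : ℝ))‖) ^
            ((n : ℝ) + s * p - 1) := by
  set q : ℝ := n + s * p
  have hq : 1 < q := by
    have : (1 : ℝ) ≤ n := by exact_mod_cast hn
    nlinarith
  refine ⟨4 * 2 ^ (q - 1), by positivity, fun L hL ε hε ω σ hω hσ ↦ ?_⟩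
  set ℓ : Fin n → ℝ := fun i => (L i : ℝ)
  set A := ‖ω - σ - (2 : ℝ) • ℓ‖
  rcases (norm_nonneg _ : 0 ≤ A).eq_or_lt with hA | hA
  · rw [show A = 0 from hA.symm, ENNReal.ofReal_zero, ENNReal.zero_rpow_of_pos (by linarith),
      ENNReal.div_zero (by positivity)]
    exact le_top
  have hI : (ε - 0) ^ (-(1 / 2) + 1 : ℝ) / (-(1 / 2) + 1) *
      ((ε - 0) ^ (-(1 / 2) + 1 : ℝ) / (-(1 / 2) + 1)) = 4 * ε := by
    rw [sub_zero, show (-(1 / 2) + 1 : ℝ) = 1 / 2 by norm_num, ← Real.sqrt_eq_rpow]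
    nlinarith [Real.mul_self_sqrt hε.le]
  have hpow : ε ^ ((n : ℝ) - s * p) = ε ^ (n - 1) * ε ^ (n - 1) * ε / ε ^ (q - 1) := by
    rw [← pow_add, ← pow_succ, ← Real.rpow_natCast, ← Real.rpow_sub hε]
    congr 1
    push_cast [hn]
    ring
  calc _ ≤ ENNReal.ofReal (ε ^ (n - 1) * ε ^ (n - 1) / (ε * A / 2) ^ (q - 1)) *
        ((∫⁻ δ in Set.Ioo 0 ε, ENNReal.ofReal ((ε - δ) ^ (-(1 / 2) : ℝ))) *
          ∫⁻ lam in Set.Ioo 0 ε, ENNReal.ofReal ((ε - lam) ^ (-(1 / 2) : ℝ))) :=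
        lintegral_lintegral_le_mul_of_le measurableSet_Ioo measurableSet_Ioo (by fun_prop)
          (by fun_prop) _ fun δ hδ lam hlam ↦
            ofReal_div_norm_rpow_le hω.le hσ.le hL hA hq.le (n - 1) hδ hlam
    _ = _ := by
        rw [lintegral_Ioo_sub_rpow hε.le (by norm_num), ENNReal.ofReal_rpow_of_pos hA,
          ← ENNReal.ofReal_div_of_pos (by positivity), ← ENNReal.ofReal_mul (by positivity),
          ← ENNReal.ofReal_mul (by positivity), hI, hpow,
          Real.div_rpow (by positivity) zero_le_two, Real.mul_rpow hε.le hA.le]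
        congr 1
        field_simp

/-- Let `n ≥ 1`, `0 < s < 1`, `1 ≤ p < ∞` with `sp < n`, and `L ∈ ℤⁿ` with
`|L| = 1` (sup norm).  There is a constant `C = C(n, s, p)` such that for every `ε > 0` and
all `ω, σ ∈ ℝⁿ` with `|ω| = |σ| = 1` (sup norm, the norm of the Pi type `Fin n → ℝ`), the
kernel `k(ω, σ) = ∫₀^ε ∫₀^ε δ^{n−1} λ^{n−1} / |δω − λσ − 2εL|^{n+sp} dδ dλ` satisfies
`k(ω, σ) ≤ C ε^{n−sp} / |ω − σ − 2L|^{n+sp−1}`. -/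
theorem statement11 (n : ℕ) (hn : 1 ≤ n) (s p : ℝ)
    (hs0 : 0 < s) (hs1 : s < 1) (hp : 1 ≤ p) (hsp : s * p < n) :
    ∃ C : ℝ, 0 < C ∧ ∀ (L : Fin n → ℤ), ‖(fun i => (L i : ℝ))‖ = 1 →
      ∀ (ε : ℝ), 0 < ε → ∀ (ω σ : Fin n → ℝ), ‖ω‖ = 1 → ‖σ‖ = 1 →
      (∫⁻ δ in Set.Ioo (0 : ℝ) ε, ∫⁻ lam in Set.Ioo (0 : ℝ) ε,
          ENNReal.ofReal (δ ^ (n - 1) * lam ^ (n - 1)) /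
            (ENNReal.ofReal ‖δ • ω - lam • σ - (2 * ε) • (fun i => (L i : ℝ))‖) ^
              ((n : ℝ) + s * p)) ≤
        ENNReal.ofReal (C * ε ^ ((n : ℝ) - s * p)) /
          (ENNReal.ofReal ‖ω - σ - (2 : ℝ) • (fun i => (L i : ℝ))‖) ^
            ((n : ℝ) + s * p - 1) :=
  statement11_general n hn s p hs0 hp
end

section
/- Let n ≥ 2 and let e₁, e₂ be the first two standard basis vectors of ℝⁿ. There is a constant C = C(n) > 0 such that for all real numbers 0 ≤ t, u ≤ 1 and all vectors v, w ∈ ℝⁿ with v ⊥ e₁ (Euclidean orthogonality), |v| = 1, w ⊥ e₂, |w| = 1 (sup norm), one has |(e₁ + t v) − (e₂ + u w)| ≥ C |(e₁ + t v) − (e₂ + w)|. -/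
/-!
Write `a = e₁ + t v - e₂`. Since `(e₁ + t v) - (e₂ + w) = (a - u w) - (1 - u) w` and `|w| = 1`,
the right-hand distance exceeds the left-hand one by at most `1 - u`. On the other hand the first
coordinate of `a - u w` is `1 - u w₁` because `v₁ = 0`, so `|a - u w| ≥ 1 - u`.
Hence `C = 1/2` works in every dimension.
-/

lemma norm_sub_le_two_mul_norm_sub_smul {E : Type*} [SeminormedAddCommGroup E] [NormedSpace ℝ E]
    {a w : E} {u : ℝ} (hu : u ≤ 1) (hw : ‖w‖ ≤ 1) (h : 1 - u ≤ ‖a - u • w‖) :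
    ‖a - w‖ ≤ 2 * ‖a - u • w‖ :=
  calc ‖a - w‖ = ‖(a - u • w) - (1 - u) • w‖ := by congr 1; module
    _ ≤ ‖a - u • w‖ + (1 - u) * ‖w‖ := by
      simpa only [norm_smul, Real.norm_of_nonneg (sub_nonneg.2 hu)] using
        norm_sub_le (a - u • w) ((1 - u) • w)
    _ ≤ ‖a - u • w‖ + (1 - u) := by nlinarith
    _ ≤ 2 * ‖a - u • w‖ := by linarith

lemma one_sub_le_abs_one_sub_mul {u b : ℝ} (hu : 0 ≤ u) (hb : |b| ≤ 1) : 1 - u ≤ |1 - u * b| :=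
  calc 1 - u ≤ 1 - u * b := by nlinarith [le_abs_self b]
    _ ≤ |1 - u * b| := le_abs_self _

lemma one_sub_le_norm_sub_smul {ι : Type*} [Fintype ι] {a w : ι → ℝ} {u : ℝ} {i : ι}
    (hai : a i = 1) (hu : 0 ≤ u) (hw : ‖w‖ ≤ 1) : 1 - u ≤ ‖a - u • w‖ :=
  calc 1 - u ≤ |1 - u * w i| := one_sub_le_abs_one_sub_mul hu ((norm_le_pi_norm w i).trans hw)
    _ = ‖(a - u • w) i‖ := by simp [hai]
    _ ≤ ‖a - u • w‖ := norm_le_pi_norm _ i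

/-- Let `n ≥ 2` and let `e₁, e₂` be the first two standard basis vectors of
`ℝⁿ`.  There is a constant `C = C(n) > 0` such that for all `0 ≤ t, u ≤ 1` and all vectors
`v, w ∈ ℝⁿ` with `v ⊥ e₁` (Euclidean orthogonality, i.e. first coordinate zero), `|v| = 1`,
`w ⊥ e₂`, `|w| = 1` (sup norm, the norm of the Pi type `Fin n → ℝ`),
`|(e₁ + t v) − (e₂ + u w)| ≥ C |(e₁ + t v) − (e₂ + w)|`. -/
theorem statement13 (n : ℕ) (hn : 2 ≤ n) :
    ∃ C : ℝ, 0 < C ∧ ∀ (t u : ℝ), 0 ≤ t → t ≤ 1 → 0 ≤ u → u ≤ 1 →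
      ∀ (v w : Fin n → ℝ),
        v ⟨0, by omega⟩ = 0 → ‖v‖ = 1 → w ⟨1, by omega⟩ = 0 → ‖w‖ = 1 →
        C * ‖(Pi.single (⟨0, by omega⟩ : Fin n) (1 : ℝ) + t • v) -
              (Pi.single (⟨1, by omega⟩ : Fin n) (1 : ℝ) + w)‖ ≤
          ‖(Pi.single (⟨0, by omega⟩ : Fin n) (1 : ℝ) + t • v) -
            (Pi.single (⟨1, by omega⟩ : Fin n) (1 : ℝ) + u • w)‖ := by
  refine ⟨1 / 2, by norm_num, fun t u _ _ hu hu1 v w hv0 _ _ hw => ?_⟩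
  set a := Pi.single (⟨0, by omega⟩ : Fin n) (1 : ℝ) + t • v - Pi.single ⟨1, by omega⟩ 1
  have ha0 : a ⟨0, by omega⟩ = 1 := by simp [a, hv0]
  have hlower : 1 - u ≤ ‖a - u • w‖ := one_sub_le_norm_sub_smul ha0 hu hw.le
  rw [sub_add_eq_sub_sub, sub_add_eq_sub_sub]
  linarith [norm_sub_le_two_mul_norm_sub_smul hu1 hw.le hlower]
end

section
/- Let n ≥ 1 and 0 ≤ j ≤ n be integers. Call a set 𝔠 ⊂ ℝⁿ a closed j-cell of the standard mesh if there exist C ∈ ℤⁿ and a subset I ⊂ {1, …, n} with #I = n − j such that C_i is odd for i ∈ I, C_i is even for i ∉ I, and 𝔠 = {X ∈ ℝⁿ : X_i = C_i for i ∈ I, |X_i − C_i| ≤ 1 for i ∉ I}. There is a constant C₀ = C₀(n, j) such that for any two distinct closed j-cells 𝔠, 𝔠' of the standard mesh with 𝔠 ∩ 𝔠' ≠ ∅, and any X ∈ 𝔠, Y ∈ 𝔠', there exists Z ∈ 𝔠 ∩ 𝔠' with |X − Z| + |Y − Z| ≤ C₀ |X − Y|. -/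
/-!
Every closed cell of the standard mesh is a coordinate box `∏ᵢ [aᵢ, bᵢ]`. Closed intervals of a
line have the one-dimensional Helly property: `[aᵢ, bᵢ]`, `[a'ᵢ, b'ᵢ]` and the segment between
`Xᵢ` and `Yᵢ` meet pairwise, hence have a common point `Zᵢ`. Since `Zᵢ` lies between `Xᵢ` and
`Yᵢ` in every coordinate, `|X − Z|` and `|Y − Z|` are both at most `|X − Y|`, so `C₀ = 2` works.
-/

open MeasureTheory Filter Topology

noncomputable section

/-- A closed `j`-cell of the standard mesh in `ℝⁿ`: a closed `j`-dimensional face of one of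
the cubes `Q̄₁(2K) = {X : |X − 2K| ≤ 1}`, `K ∈ ℤⁿ`.  It is determined by a center
`C ∈ ℤⁿ` with exactly `n − j` odd coordinates (indexed by `I`), all other coordinates even. -/
def IsClosedCell (n j : ℕ) (c : Set (Fin n → ℝ)) : Prop :=
  ∃ (C : Fin n → ℤ) (I : Finset (Fin n)),
    I.card = n - j ∧ (∀ i ∈ I, Odd (C i)) ∧ (∀ i ∉ I, Even (C i)) ∧
    c = {X : Fin n → ℝ | (∀ i ∈ I, X i = (C i : ℝ)) ∧ ∀ i ∉ I, |X i - (C i : ℝ)| ≤ 1}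

open Set

section Helly

variable {α : Type*} [LinearOrder α] {a b a' b' x y : α}

lemma max_mem_Icc_inter_Icc_of_le (hxy : x ≤ y) (hx : x ∈ Icc a b) (hy : y ∈ Icc a' b')
    (h : (Icc a b ∩ Icc a' b').Nonempty) : max x a' ∈ Icc a b ∩ Icc a' b' ∩ Icc x y := by
  obtain ⟨w, ⟨-, hwb⟩, ⟨haw, -⟩⟩ := h
  exact ⟨⟨⟨le_max_of_le_left hx.1, max_le hx.2 (haw.trans hwb)⟩,
    ⟨le_max_right _ _, max_le (hxy.trans hy.2) (hy.1.trans hy.2)⟩⟩,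
    ⟨le_max_left _ _, max_le hxy hy.1⟩⟩

lemma exists_mem_Icc_inter_Icc_inter_uIcc (hx : x ∈ Icc a b) (hy : y ∈ Icc a' b')
    (h : (Icc a b ∩ Icc a' b').Nonempty) : ∃ z, z ∈ Icc a b ∩ Icc a' b' ∩ uIcc x y := by
  rcases le_total x y with hxy | hyx
  · obtain ⟨hz, hzxy⟩ := max_mem_Icc_inter_Icc_of_le hxy hx hy h
    exact ⟨_, hz, Icc_subset_uIcc hzxy⟩
  · obtain ⟨hz, hzyx⟩ := max_mem_Icc_inter_Icc_of_le hyx hy hx (inter_comm _ _ ▸ h)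
    exact ⟨_, inter_comm _ _ ▸ hz, Icc_subset_uIcc' hzyx⟩

end Helly

section Box

variable {ι : Type*} [Fintype ι]

lemma norm_sub_le_of_forall_mem_uIcc {X Y Z : ι → ℝ} (h : ∀ i, Z i ∈ uIcc (X i) (Y i)) :
    ‖X - Z‖ ≤ ‖X - Y‖ := by
  refine (pi_norm_le_iff_of_nonneg (norm_nonneg _)).2 fun i => ?_
  calc ‖(X - Z) i‖ = |Z i - X i| := by rw [Pi.sub_apply, Real.norm_eq_abs, abs_sub_comm]
    _ ≤ |Y i - X i| := abs_sub_left_of_mem_uIcc (h i)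
    _ = ‖(X - Y) i‖ := by rw [Pi.sub_apply, Real.norm_eq_abs, abs_sub_comm]
    _ ≤ ‖X - Y‖ := norm_le_pi_norm _ i

lemma exists_mem_pi_Icc_inter_norm_sub_le {a b a' b' X Y : ι → ℝ}
    (hX : X ∈ univ.pi fun i => Icc (a i) (b i)) (hY : Y ∈ univ.pi fun i => Icc (a' i) (b' i))
    (h : ((univ.pi fun i => Icc (a i) (b i)) ∩ univ.pi fun i => Icc (a' i) (b' i)).Nonempty) :
    ∃ Z ∈ (univ.pi fun i => Icc (a i) (b i)) ∩ univ.pi fun i => Icc (a' i) (b' i),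
      ‖X - Z‖ ≤ ‖X - Y‖ ∧ ‖Y - Z‖ ≤ ‖X - Y‖ := by
  obtain ⟨W, hW, hW'⟩ := h
  choose Z hZ using fun i => exists_mem_Icc_inter_Icc_inter_uIcc (hX i trivial) (hY i trivial)
    ⟨W i, hW i trivial, hW' i trivial⟩
  refine ⟨Z, ⟨fun i _ => (hZ i).1.1, fun i _ => (hZ i).1.2⟩,
    norm_sub_le_of_forall_mem_uIcc fun i => (hZ i).2, ?_⟩
  rw [norm_sub_rev X Y]
  exact norm_sub_le_of_forall_mem_uIcc fun i => uIcc_comm (X i) (Y i) ▸ (hZ i).2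

end Box

lemma IsClosedCell.exists_eq_pi_Icc {n j : ℕ} {c : Set (Fin n → ℝ)} (hc : IsClosedCell n j c) :
    ∃ a b : Fin n → ℝ, c = univ.pi fun i => Icc (a i) (b i) := by
  obtain ⟨C, I, -, -, -, rfl⟩ := hc
  let r : Fin n → ℝ := fun i => if i ∈ I then 0 else 1
  refine ⟨fun i => C i - r i, fun i => C i + r i, ?_⟩
  have mem_Icc_iff_abs_sub_le (x : ℝ) (i : Fin n) :
      x ∈ Icc (C i - r i) (C i + r i) ↔ |x - C i| ≤ r i := by
    rw [← mem_Icc_iff_abs_le, abs_sub_comm]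
  ext X
  simp only [mem_univ_pi, mem_Icc_iff_abs_sub_le]
  refine ⟨fun ⟨hI, hIc⟩ i => ?_, fun h => ⟨fun i hi => ?_, fun i hi => ?_⟩⟩
  · by_cases hi : i ∈ I
    · simp [r, hi, hI i hi]
    · simpa [r, hi] using hIc i hi
  · simpa [r, hi, sub_eq_zero] using h i
  · simpa [r, hi] using h i

theorem statement16_general (n j : ℕ) :
    ∃ C₀ : ℝ, 0 < C₀ ∧ ∀ (c c' : Set (Fin n → ℝ)),
      IsClosedCell n j c → IsClosedCell n j c' → c ≠ c' → (c ∩ c').Nonempty →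
      ∀ X ∈ c, ∀ Y ∈ c', ∃ Z ∈ c ∩ c', ‖X - Z‖ + ‖Y - Z‖ ≤ C₀ * ‖X - Y‖ := by
  refine ⟨2, two_pos, fun c c' hc hc' _ hcc' X hX Y hY => ?_⟩
  obtain ⟨a, b, rfl⟩ := hc.exists_eq_pi_Icc
  obtain ⟨a', b', rfl⟩ := hc'.exists_eq_pi_Icc
  obtain ⟨Z, hZ, hXZ, hYZ⟩ := exists_mem_pi_Icc_inter_norm_sub_le hX hY hcc'
  exact ⟨Z, hZ, by linarith⟩

/-- Let `n ≥ 1` and `0 ≤ j ≤ n`.  There is a constant `C₀ = C₀(n, j)` such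
that for any two distinct closed `j`-cells `c, c'` of the standard mesh with `c ∩ c' ≠ ∅`
and any `X ∈ c`, `Y ∈ c'`, there is `Z ∈ c ∩ c'` with `|X − Z| + |Y − Z| ≤ C₀ |X − Y|`
(sup norm, the norm of the Pi type `Fin n → ℝ`). -/
theorem statement16 (n j : ℕ) (hn : 1 ≤ n) (hj : j ≤ n) :
    ∃ C₀ : ℝ, 0 < C₀ ∧ ∀ (c c' : Set (Fin n → ℝ)),
      IsClosedCell n j c → IsClosedCell n j c' → c ≠ c' → (c ∩ c').Nonempty →
      ∀ X ∈ c, ∀ Y ∈ c', ∃ Z ∈ c ∩ c', ‖X - Z‖ + ‖Y - Z‖ ≤ C₀ * ‖X - Y‖ :=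
  statement16_general n j
end
end
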